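/- arXiv:1202.4399 — 6 statements merged into one kernel-verified Lean document; each statement's English description precedes it below -/
import Mathlib

section
/- Every (ℵ0,ℵ1)-graph X with bipartition (A,B) has a subgraph X' induced by sets A' ⊆ A and B' ⊆ B such that X' is an (ℵ0,ℵ1)-graph with bipartition (A',B') and, in addition, every vertex of A' has uncountable degree in X'. -/
/-! Discard from `A` the vertices of countable degree. Their neighbourhoods form a countable set
`C`, so `B' := B \ C` still has size `ℵ₁`, and every neighbour of a vertex of `B'` has uncountable
degree; hence the vertices of `B'` keep all their infinitely many edges, which makes the new
countable class infinite, while a vertex of uncountable degree loses only its neighbours in `C`. -/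

universe u v

/-- The tree order of a rooted tree `T` with root `r`:
`x ≤ y` iff `x` lies on every (equivalently, the unique) path in `T` from `r` to `y`. -/
def treeLE {V : Type u} (T : SimpleGraph V) (r : V) (x y : V) : Prop :=
  ∀ p : T.Walk r y, p.IsPath → x ∈ p.support

/-- `T` is a normal spanning tree of `G` with root `r`: a spanning tree of `G` such that the
endvertices of every edge of `G` are comparable in the tree order of `T`. -/
def IsNormalSpanningTree {V : Type u} (G T : SimpleGraph V) (r : V) : Prop :=
  T.IsTree ∧ T ≤ G ∧ ∀ ⦃x y : V⦄, G.Adj x y → (treeLE T r x y ∨ treeLE T r y x)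

/-- A fat `TK_ℵ0` in a simple graph `G`: a countably infinite family of branch vertices
together with, for every pair of branch vertices, a family of `ℵ1` paths of `G` between them,
all internally disjoint from each other and from the paths joining other pairs, with branch
vertices occurring only as endpoints. -/
structure FatTKAleph0 {V : Type u} (G : SimpleGraph V) where
  branch : ℕ → V
  branch_inj : Function.Injective branch
  Idx : Type
  idx_card : Cardinal.mk Idx = Cardinal.aleph 1
  path : ∀ i j : ℕ, i < j → Idx → G.Walk (branch i) (branch j)
  isPath : ∀ (i j : ℕ) (h : i < j) (α : Idx), (path i j h α).IsPath
  branch_not_internal : ∀ (i j : ℕ) (h : i < j) (α : Idx) (k : ℕ),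
    branch k ∈ (path i j h α).support → k = i ∨ k = j
  internally_disjoint : ∀ (i j : ℕ) (h : i < j) (α : Idx)
    (i' j' : ℕ) (h' : i' < j') (α' : Idx),
    (i, j, α) ≠ (i', j', α') → ∀ w : V, w ∈ (path i j h α).support →
      w ∈ (path i' j' h' α').support →
      (w = branch i ∨ w = branch j) ∧ (w = branch i' ∨ w = branch j')
  path_ne : ∀ (i j : ℕ) (h : i < j) (α α' : Idx), α ≠ α' →
    path i j h α ≠ path i j h α'

/-- `G` contains a fat `TK_ℵ0` as a subgraph. -/
def HasFatTKAleph0 {V : Type u} (G : SimpleGraph V) : Prop :=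
  Nonempty (FatTKAleph0 G)

/-- `G` contains a `TK_ℵ0`, a subdivision of the countably infinite complete graph,
as a subgraph. -/
def HasTKAleph0 {V : Type u} (G : SimpleGraph V) : Prop :=
  ∃ (b : ℕ → V) (P : ∀ i j : ℕ, i < j → G.Walk (b i) (b j)),
    Function.Injective b ∧
    (∀ (i j : ℕ) (h : i < j), (P i j h).IsPath) ∧
    (∀ (i j : ℕ) (h : i < j) (k : ℕ), b k ∈ (P i j h).support → k = i ∨ k = j) ∧
    (∀ (i j : ℕ) (h : i < j) (i' j' : ℕ) (h' : i' < j'), (i, j) ≠ (i', j') →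
      ∀ w : V, w ∈ (P i j h).support → w ∈ (P i' j' h').support →
        (w = b i ∨ w = b j) ∧ (w = b i' ∨ w = b j'))

/-- `X` is an `(ℵ0, ℵ1)`-graph with bipartition `(A, B)`: a bipartite graph with vertex
classes `A` of size `ℵ0` and `B` of size `ℵ1` in which every vertex of `B` has infinite
degree. -/
def IsAleph0Aleph1Graph {V : Type u} (X : SimpleGraph V) (A B : Set V) : Prop :=
  Disjoint A B ∧ A ∪ B = Set.univ ∧
  Cardinal.mk A = Cardinal.aleph0 ∧ Cardinal.mk B = Cardinal.aleph 1 ∧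
  (∀ ⦃x y : V⦄, X.Adj x y → (x ∈ A ∧ y ∈ B) ∨ (x ∈ B ∧ y ∈ A)) ∧
  (∀ b ∈ B, (X.neighborSet b).Infinite)

/-- `(T, ≤)` is an Aronszajn tree: it has a least element, all down-closures are
well-ordered, `T` is uncountable, and all chains and all levels of `T` are countable
(points are on the same level iff their strict down-closures are order-isomorphic). -/
def IsAronszajnTree (T : Type u) [PartialOrder T] : Prop :=
  (∃ r : T, ∀ t : T, r ≤ t) ∧
  (∀ t : T, IsChain (· ≤ ·) (Set.Iic t)) ∧
  (∀ t : T, (Set.Iic t).WellFoundedOn (· < ·)) ∧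
  ¬ (Set.univ : Set T).Countable ∧
  (∀ C : Set T, IsChain (· ≤ ·) C → C.Countable) ∧
  (∀ t : T, {s : T | Nonempty (↥(Set.Iio s) ≃o ↥(Set.Iio t))}.Countable)

/-- `X` is an Aronszajn-tree graph with respect to the partial order on its vertex type:
the order is an Aronszajn tree, the endvertices of every edge are comparable, and every
vertex is joined cofinally to the vertices below it. -/
def IsATGraph {V : Type u} [PartialOrder V] (X : SimpleGraph V) : Prop :=
  IsAronszajnTree V ∧
  (∀ ⦃x y : V⦄, X.Adj x y → x ≤ y ∨ y ≤ x) ∧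
  (∀ ⦃x y : V⦄, x < y → ∃ x' : V, X.Adj y x' ∧ x ≤ x' ∧ x' < y)

/-- `H` is an `IX` (an inflated copy of `X`): `V(H)` is partitioned into branch sets
`Vx x`, each inducing a connected subgraph of `H`, such that distinct `x, y` are adjacent
in `X` iff `H` has an edge between `Vx x` and `Vx y`. -/
def IsIX {W : Type v} {V : Type u} (H : SimpleGraph W) (X : SimpleGraph V) : Prop :=
  ∃ Vx : V → Set W,
    (∀ w : W, ∃! x : V, w ∈ Vx x) ∧
    (∀ x : V, (H.induce (Vx x)).Connected) ∧
    (∀ x y : V, x ≠ y → (X.Adj x y ↔ ∃ a ∈ Vx x, ∃ b ∈ Vx y, H.Adj a b))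

/-- `X` is a minor of `G`: some subgraph of `G` is an `IX`. -/
def HasMinor {V : Type u} {W : Type v} (G : SimpleGraph V) (X : SimpleGraph W) : Prop :=
  ∃ H' : G.Subgraph, IsIX H'.coe X

/-- A ray (one-way infinite path) in `G`. -/
def IsRay {V : Type u} (G : SimpleGraph V) (f : ℕ → V) : Prop :=
  Function.Injective f ∧ ∀ n : ℕ, G.Adj (f n) (f (n + 1))

/-- `U` is a dispersed set of vertices of `G`: every ray of `G` can be separated from `U`
by a finite set `S` of vertices, i.e. no component of `G - S` contains both a vertex of
`U` and a tail of the ray. -/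
def Dispersed {V : Type u} (G : SimpleGraph V) (U : Set V) : Prop :=
  ∀ f : ℕ → V, IsRay G f →
    ∃ S : Set V, S.Finite ∧ ∃ m : ℕ, ∀ n ≥ m, ∀ u ∈ U,
      ∀ (hu : u ∈ Sᶜ) (hn : f n ∈ Sᶜ),
        ¬ (G.induce Sᶜ).Reachable ⟨u, hu⟩ ⟨f n, hn⟩

open Cardinal Set

theorem Cardinal.mk_sdiff_eq_of_mk_lt {α : Type u} {s t : Set α} (hs : ℵ₀ ≤ #s) (ht : #t < #s) :
    #(s \ t : Set α) = #s := by
  have hsum := mk_sdiff_add_mk (inter_subset_left : s ∩ t ⊆ s)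
  rw [sdiff_self_inter, add_comm] at hsum
  exact eq_of_add_eq_of_aleph0_le hsum ((mk_le_mk_of_subset inter_subset_right).trans_lt ht) hs

namespace SimpleGraph

variable {V : Type u} {G : SimpleGraph V}

theorem image_val_neighborSet_induce (s : Set V) (v : s) :
    Subtype.val '' (G.induce s).neighborSet v = G.neighborSet v ∩ s := by
  change Subtype.val '' (Subtype.val ⁻¹' G.neighborSet v) = _
  rw [Subtype.image_preimage_coe, inter_comm]

theorem IsBipartiteWith.induce_union {s t s' t' : Set V} (h : G.IsBipartiteWith s t)
    (hs : s' ⊆ s) (ht : t' ⊆ t) :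
    (G.induce (s' ∪ t')).IsBipartiteWith {v | (v : V) ∈ s'} {v | (v : V) ∈ t'} where
  disjoint := Set.disjoint_left.2 fun _ hv hv' => Set.disjoint_left.1 h.disjoint (hs hv) (ht hv')
  mem_of_adj := by
    have hs' : ∀ v ∈ s' ∪ t', v ∈ s → v ∈ s' := fun v hv hvs =>
      hv.resolve_right fun hvt => Set.disjoint_left.1 h.disjoint hvs (ht hvt)
    have ht' : ∀ v ∈ s' ∪ t', v ∈ t → v ∈ t' := fun v hv hvt =>
      hv.resolve_left fun hvs => Set.disjoint_left.1 h.disjoint (hs hvs) hvt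
    rintro ⟨v, hv⟩ ⟨w, hw⟩ hadj
    rcases h.mem_of_adj hadj with ⟨hvs, hwt⟩ | ⟨hvt, hws⟩
    · exact Or.inl ⟨hs' v hv hvs, ht' w hw hwt⟩
    · exact Or.inr ⟨ht' v hv hvt, hs' w hw hws⟩

end SimpleGraph

open SimpleGraph

section

variable {V : Type u} {X : SimpleGraph V} {A B : Set V}

theorem IsAleph0Aleph1Graph.isBipartiteWith (h : IsAleph0Aleph1Graph X A B) :
    X.IsBipartiteWith A B :=
  ⟨h.1, h.2.2.2.2.1⟩

theorem isAleph0Aleph1Graph_induce_union {A' B' : Set V} (h : X.IsBipartiteWith A B)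
    (hA' : A' ⊆ A) (hB' : B' ⊆ B) (hA'card : #A' = ℵ₀) (hB'card : #B' = ℵ₁)
    (hdeg : ∀ b ∈ B', (X.neighborSet b ∩ A').Infinite) :
    IsAleph0Aleph1Graph (X.induce (A' ∪ B'))
      {v : ↥(A' ∪ B') | (v : V) ∈ A'} {v : ↥(A' ∪ B') | (v : V) ∈ B'} := by
  have hbip := h.induce_union hA' hB'
  refine ⟨hbip.disjoint, eq_univ_of_forall fun v => v.2, ?_, ?_, hbip.mem_of_adj, ?_⟩
  · exact (mk_preimage_of_injective_of_subset_range _ _ Subtype.val_injective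
      (by rw [Subtype.range_coe]; exact subset_union_left)).trans hA'card
  · exact (mk_preimage_of_injective_of_subset_range _ _ Subtype.val_injective
      (by rw [Subtype.range_coe]; exact subset_union_right)).trans hB'card
  · intro v hv
    refine Infinite.of_image Subtype.val ?_
    rw [image_val_neighborSet_induce]
    exact (hdeg v hv).mono (inter_subset_inter_right _ subset_union_left)

section HighDegreePart

variable (X A)

def highDegreePart : Set V := {a ∈ A | ¬ (X.neighborSet a).Countable}

def lowDegreeNeighborhood : Set V := ⋃ a ∈ A \ highDegreePart X A, X.neighborSet a

variable {X A}

theorem countable_lowDegreeNeighborhood (hA : A.Countable) :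
    (lowDegreeNeighborhood X A).Countable :=
  (hA.mono sdiff_subset).biUnion fun _ ha => not_not.1 fun hc => ha.2 ⟨ha.1, hc⟩

theorem neighborSet_inter_subset_highDegreePart {b : V} (hb : b ∉ lowDegreeNeighborhood X A) :
    X.neighborSet b ∩ A ⊆ highDegreePart X A := fun _ ⟨hab, ha⟩ =>
  not_not.1 fun ha' => hb (mem_biUnion ⟨ha, ha'⟩ (X.adj_symm hab))

theorem not_countable_neighborSet_sdiff_lowDegreeNeighborhood (hA : A.Countable) {a : V}
    (ha : a ∈ highDegreePart X A) :
    ¬ (X.neighborSet a \ lowDegreeNeighborhood X A).Countable := fun hc =>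
  ha.2 <| (hc.union (countable_lowDegreeNeighborhood hA)).mono (subset_sdiff_union _ _)

end HighDegreePart

end

/-- Every `(ℵ0, ℵ1)`-graph has an induced `(ℵ0, ℵ1)`-subgraph in which, additionally,
every vertex of the countable class has uncountable degree. -/
theorem stmt5 {V : Type u} (X : SimpleGraph V) (A B : Set V)
    (h : IsAleph0Aleph1Graph X A B) :
    ∃ A' B' : Set V, A' ⊆ A ∧ B' ⊆ B ∧
      IsAleph0Aleph1Graph (X.induce (A' ∪ B'))
        {v : ↥(A' ∪ B') | (v : V) ∈ A'} {v : ↥(A' ∪ B') | (v : V) ∈ B'} ∧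
      ∀ v : ↥(A' ∪ B'), (v : V) ∈ A' →
        ¬ ((X.induce (A' ∪ B')).neighborSet v).Countable := by
  have hbip := h.isBipartiteWith
  obtain ⟨-, -, hAcard, hBcard, -, hdeg⟩ := h
  have hA : A.Countable := le_aleph0_iff_set_countable.1 hAcard.le
  set A' := highDegreePart X A
  set B' := B \ lowDegreeNeighborhood X A
  have hA'A : A' ⊆ A := sep_subset _ _
  have hC := countable_lowDegreeNeighborhood (X := X) hA
  have hB'card : #B' = ℵ₁ := by
    rw [← hBcard]
    exact mk_sdiff_eq_of_mk_lt (hBcard ▸ aleph0_le_aleph 1)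
      (hBcard ▸ hC.le_aleph0.trans_lt aleph0_lt_aleph_one)
  have hB'nbhd : ∀ b ∈ B', X.neighborSet b ⊆ A' := fun b hb =>
    (subset_inter subset_rfl (isBipartiteWith_neighborSet_subset' hbip hb.1)).trans
      (neighborSet_inter_subset_highDegreePart hb.2)
  obtain ⟨b, hb⟩ : B'.Nonempty := by
    rw [← nonempty_coe_sort, ← mk_ne_zero_iff, hB'card]
    exact (aleph_pos 1).ne'
  have hA'card : #A' = ℵ₀ := by
    have := ((hdeg b hb.1).mono (hB'nbhd b hb)).to_subtype
    have := (hA.mono hA'A).to_subtype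
    exact mk_eq_aleph0 A'
  refine ⟨A', B', hA'A, sdiff_subset, isAleph0Aleph1Graph_induce_union hbip hA'A
    sdiff_subset hA'card hB'card fun b hb => ?_, fun v hv hc => ?_⟩
  · rw [inter_eq_left.2 (hB'nbhd b hb)]
    exact hdeg b hb.1
  · refine not_countable_neighborSet_sdiff_lowDegreeNeighborhood hA hv ?_
    refine (hc.image Subtype.val).mono ?_
    rw [image_val_neighborSet_induce]
    exact fun w hw => ⟨hw.1, Or.inr ⟨isBipartiteWith_neighborSet_subset hbip hv.1 hw.1, hw.2⟩⟩
end

section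
/- Let X be an (ℵ0,ℵ1)-graph with bipartition (A,B), and let A' ⊆ A be infinite and such that for every two distinct vertices a, a' ∈ A' there is an uncountable set B(a,a') ⊆ B of common neighbours of a and a'. Then X contains a fat TK_ℵ0 whose set of branch vertices is A' and whose subdivided edges are all paths of the form a b a' with a, a' ∈ A' and b ∈ B(a,a'). -/
universe u v

/-!
Enumerate `A'` as `a₀, a₁, …`. The pairs `i < j` are countably many and each `Bf aᵢ aⱼ` is
uncountable, so a transfinite recursion of length `ω₁` picks, for every pair and every
`α < ω₁`, a fresh common neighbour `b(i, j, α) ∈ Bf aᵢ aⱼ`: at each step only countably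
many vertices have been used. The paths `aᵢ b(i, j, α) aⱼ` then form a fat `TK_ℵ0`, since the
`b(i, j, α)` are pairwise distinct and lie in `B`, which is disjoint from the branch set `A'`.
-/

open Cardinal SimpleGraph

abbrev OmegaOne : Type := (ℵ₁ : Cardinal.{0}).ord.ToType

theorem OmegaOne.countable_Iio (α : OmegaOne) : (Set.Iio α).Countable := by
  rw [← le_aleph0_iff_set_countable, ← lt_aleph_one_iff]
  simpa using mk_Iio_lt α (by rw [mk_ord_toType, Ordinal.type_toType])

theorem mk_omegaOne : #OmegaOne = ℵ₁ := mk_ord_toType _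

theorem OmegaOne.nonempty_prod_equiv (κ : Type) [Countable κ] [Nonempty κ] :
    Nonempty (OmegaOne × κ ≃ OmegaOne) := by
  rw [← Cardinal.eq, mk_prod, lift_id, lift_id, mk_omegaOne]
  exact Cardinal.mul_eq_left (aleph0_le_aleph 1) (mk_le_aleph0.trans aleph0_lt_aleph_one.le)
    (mk_ne_zero κ)

theorem exists_injective_forall_mem_of_countable_Iio {ι : Type*} [LinearOrder ι]
    [WellFoundedLT ι] (hι : ∀ i : ι, (Set.Iio i).Countable) {V : Type*} (S : ι → Set V)
    (hS : ∀ i, ¬ (S i).Countable) :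
    ∃ g : ι → V, Function.Injective g ∧ ∀ i, g i ∈ S i := by
  have fresh : ∀ i (f : Set.Iio i → V), ∃ v ∈ S i, v ∉ Set.range f := fun i f =>
    have := (hι i).to_subtype
    Set.not_subset.mp fun hsub => hS i <| (Set.countable_range f).mono hsub
  choose pick pick_mem pick_fresh using fresh
  let g : ι → V := WellFoundedLT.fix fun i ih => pick i fun j => ih j j.2
  have hg : ∀ i, g i = pick i fun j => g j := WellFoundedLT.fix_eq _
  have hlt : ∀ ⦃i j⦄, i < j → g i ≠ g j := fun i j hij heq =>
    pick_fresh j (fun k => g k) ⟨⟨i, hij⟩, heq.trans (hg j)⟩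
  refine ⟨g, fun i j hij => ?_, fun i => hg i ▸ pick_mem i _⟩
  by_contra hne
  rcases lt_or_gt_of_ne hne with h | h
  exacts [hlt h hij, hlt h hij.symm]

theorem exists_injective_omegaOne_prod {κ : Type} [Countable κ] [Nonempty κ] {V : Type*}
    (S : κ → Set V) (hS : ∀ k, ¬ (S k).Countable) :
    ∃ g : OmegaOne × κ → V, Function.Injective g ∧ ∀ α k, g (α, k) ∈ S k := by
  obtain ⟨e⟩ := OmegaOne.nonempty_prod_equiv κ
  obtain ⟨g, g_inj, g_mem⟩ := exists_injective_forall_mem_of_countable_Iio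
    OmegaOne.countable_Iio (fun α => S (e.symm α).2) fun α => hS _
  exact ⟨g ∘ e, g_inj.comp e.injective, fun α k => by simpa using g_mem (e (α, k))⟩

namespace FatTKAleph0

variable {V : Type u} {G : SimpleGraph V}
  (branch : ℕ → V) (branch_inj : Function.Injective branch)
  (Idx : Type) (idx_card : #Idx = ℵ_ 1) (mid : ∀ i j : ℕ, i < j → Idx → V)
  (adj : ∀ i j h α, G.Adj (branch i) (mid i j h α) ∧ G.Adj (mid i j h α) (branch j))
  (mid_inj : ∀ i j h α i' j' h' α',
    mid i j h α = mid i' j' h' α' → (i, j, α) = (i', j', α'))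
  (mid_ne_branch : ∀ i j h α k, mid i j h α ≠ branch k)

def ofMidpoints : FatTKAleph0 G where
  branch := branch
  branch_inj := branch_inj
  Idx := Idx
  idx_card := idx_card
  path i j h α := .cons (adj i j h α).1 (.cons (adj i j h α).2 .nil)
  isPath i j h α := by
    have hij : branch i ≠ branch j := branch_inj.ne h.ne
    have := mid_ne_branch i j h α
    simp_all [Walk.isPath_def, eq_comm]
  branch_not_internal i j h α k hk := by
    simp only [Walk.support_cons, Walk.support_nil, List.mem_cons, List.not_mem_nil,
      or_false] at hk
    rcases hk with hk | hk | hk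
    · exact .inl (branch_inj hk)
    · exact absurd hk.symm (mid_ne_branch i j h α k)
    · exact .inr (branch_inj hk)
  internally_disjoint i j h α i' j' h' α' hne w hw hw' := by
    simp only [Walk.support_cons, Walk.support_nil, List.mem_cons, List.not_mem_nil,
      or_false] at hw hw'
    have not_mid : w ≠ mid i j h α := by
      rintro rfl
      rcases hw' with hw' | hw' | hw'
      exacts [mid_ne_branch i j h α _ hw', hne (mid_inj _ _ _ _ _ _ _ _ hw'),
        mid_ne_branch i j h α _ hw']
    have not_mid' : w ≠ mid i' j' h' α' := by
      rintro rfl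
      rcases hw with hw | hw | hw
      exacts [mid_ne_branch i' j' h' α' _ hw, hne (mid_inj _ _ _ _ _ _ _ _ hw).symm,
        mid_ne_branch i' j' h' α' _ hw]
    tauto
  path_ne i j h α α' hne heq := by
    have := congrArg Walk.support heq
    simp only [Walk.support_cons, Walk.support_nil, List.cons.injEq] at this
    simpa [hne] using mid_inj _ _ _ _ _ _ _ _ this.2.1

end FatTKAleph0

/-- If `A' ⊆ A` is infinite and every two distinct vertices of `A'` have an uncountable
set `Bf a a'` of common neighbours in `B`, then `X` contains a fat `TK_ℵ0` whose branch
vertices are exactly `A'` and whose subdivided edges all have the form `a b a'` with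
`b ∈ Bf a a'`. -/
theorem stmt7 {V : Type u} (X : SimpleGraph V) (A B : Set V)
    (h : IsAleph0Aleph1Graph X A B)
    (A' : Set V) (hA'A : A' ⊆ A) (hA' : A'.Infinite)
    (Bf : V → V → Set V)
    (hBf : ∀ a ∈ A', ∀ a' ∈ A', a ≠ a' →
      Bf a a' ⊆ B ∧ ¬ (Bf a a').Countable ∧
      ∀ b ∈ Bf a a', X.Adj a b ∧ X.Adj a' b) :
    ∃ K : FatTKAleph0 X, Set.range K.branch = A' ∧
      ∀ (i j : ℕ) (hij : i < j) (α : K.Idx),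
        ∃ b ∈ Bf (K.branch i) (K.branch j),
          (K.path i j hij α).support = [K.branch i, b, K.branch j] := by
  obtain ⟨hAB, -, hA, -, -, -⟩ := h
  have : Countable A' := ((le_aleph0_iff_set_countable.mp hA.le).mono hA'A).to_subtype
  have : Infinite A' := hA'.to_subtype
  obtain ⟨e⟩ : Nonempty (ℕ ≃ A') := nonempty_equiv_of_countable
  let a : ℕ → V := fun n => e n
  have a_inj : Function.Injective a := Subtype.val_injective.comp e.injective
  have hBf' : ∀ i j, i < j → _ := fun i j h => hBf (a i) (e i).2 (a j) (e j).2 (a_inj.ne h.ne)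
  have : Nonempty {p : ℕ × ℕ // p.1 < p.2} := ⟨⟨(0, 1), one_pos⟩⟩
  obtain ⟨g, g_inj, g_mem⟩ := exists_injective_omegaOne_prod
    (fun p : {p : ℕ × ℕ // p.1 < p.2} => Bf (a p.1.1) (a p.1.2)) fun p => (hBf' _ _ p.2).2.1
  let mid i j (h : i < j) α := g (α, ⟨(i, j), h⟩)
  have mid_mem i j h α : mid i j h α ∈ Bf (a i) (a j) := g_mem α ⟨(i, j), h⟩
  let K := FatTKAleph0.ofMidpoints a a_inj OmegaOne mk_omegaOne mid
    (fun i j h α => (hBf' i j h).2.2 _ (mid_mem i j h α) |>.imp_right Adj.symm)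
    (fun i j h α i' j' h' α' heq => by cases g_inj heq; rfl)
    (fun i j h α k heq =>
      hAB.ne_of_mem (hA'A (e k).2) ((hBf' i j h).1 (mid_mem i j h α)) heq.symm)
  refine ⟨K, ?_, fun i j h α => ⟨mid i j h α, mid_mem i j h α, rfl⟩⟩
  ext v
  exact ⟨fun ⟨n, hn⟩ => hn ▸ (e n).2,
    fun hv => ⟨e.symm ⟨v, hv⟩, by simp [K, FatTKAleph0.ofMidpoints, a]⟩⟩
end

section
/- Every Aronszajn-tree graph contains a fat TK_ℵ0 as a subgraph. -/
universe u v

/-!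
Pick a vertex `t ξ` on every level `ξ < ω₁`. At a limit level, condition (b) makes the
down-neighbours of `t ξ` cofinal below it, so they contain a strictly increasing sequence
`F ξ 0 < F ξ 1 < ⋯`. The heights of the `F ξ k` are below `ξ` and levels are countable, so
Fodor's pressing-down lemma, applied once for every `k`, yields vertices `b 0 < b 1 < ⋯` such that
for every `n` the levels `ξ` with `F ξ k = b k` for all `k < n` form a stationary, hence
uncountable, set. Thus any `b 0, …, b j` have uncountably many common neighbours `t ξ`; choosing
them pairwise distinct gives, for all `i < j`, `ℵ₁` internally disjoint paths `b i – t ξ – b j`.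
-/

open Cardinal Order Ordinal Set

section Stationary

variable {α : Type*} [LinearOrder α]

theorem nonempty_of_aleph0_lt_cof (hα : ℵ₀ < cof α) : Nonempty α := by
  by_contra h
  rw [not_nonempty_iff] at h
  simp at hα

theorem noMaxOrder_of_aleph0_lt_cof (hα : ℵ₀ < cof α) : NoMaxOrder α := by
  have := nonempty_of_aleph0_lt_cof hα
  exact (noTopOrder_iff_noMaxOrder α).1 (one_lt_cof_iff.1 (one_lt_aleph0.trans hα))

theorem Set.Countable.bddAbove_of_aleph0_lt_cof (hα : ℵ₀ < cof α) {s : Set α}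
    (hs : s.Countable) : BddAbove s :=
  .of_not_isCofinal fun h => (cof_le h).not_gt <| hα.trans_le' (le_aleph0_iff_set_countable.2 hs)

theorem isClub_Ioi [NoMaxOrder α] (a : α) : IsClub (Ioi a) := by
  refine ⟨dirSupClosed_iff_of_linearOrder.2 fun d hd ⟨b, hb⟩ c hc => (hd hb).trans_le (hc.1 hb),
    fun b => ?_⟩
  obtain ⟨c, hc⟩ := exists_gt (max a b)
  exact ⟨c, (le_max_left a b).trans_lt hc, (le_max_right a b).trans hc.le⟩

theorem IsStationary.not_bddAbove [NoMaxOrder α] {s : Set α} (hs : IsStationary s) :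
    ¬ BddAbove s := by
  rintro ⟨a, ha⟩
  obtain ⟨b, hbs, hb⟩ := hs (isClub_Ioi a)
  exact (ha hbs).not_gt hb

theorem IsStationary.not_countable (hα : ℵ₀ < cof α) {s : Set α} (hs : IsStationary s) :
    ¬ s.Countable :=
  have := noMaxOrder_of_aleph0_lt_cof hα
  fun hc => hs.not_bddAbove (hc.bddAbove_of_aleph0_lt_cof hα)

variable [WellFoundedLT α]

theorem BddAbove.exists_isLUB_of_wellFoundedLT {s : Set α} (hs : BddAbove s) :
    ∃ a, IsLUB s a := by
  obtain ⟨a, ha, hmin⟩ := wellFounded_lt.has_min _ hs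
  exact ⟨a, ha, fun b hb => not_lt.1 (hmin b hb)⟩

theorem IsStationary.inter_isClub (hα : ℵ₀ < cof α) {s t : Set α} (hs : IsStationary s)
    (ht : IsClub t) : IsStationary (s ∩ t) := fun u hu => by
  simpa [inter_assoc] using hs (ht.inter hα.ne' hu)

theorem isClub_setOf_isSuccLimit (hα : ℵ₀ < cof α) : IsClub {x : α | IsSuccLimit x} := by
  have := noMaxOrder_of_aleph0_lt_cof hα
  refine ⟨dirSupClosed_iff_of_linearOrder.2 fun d hd hne a ha => ?_, fun a => ?_⟩
  · by_cases had : a ∈ d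
    · exact hd had
    · exact ha.isSuccLimit_of_notMem hne had
  · obtain ⟨f, hf, rfl⟩ := Nat.exists_strictMono' a
    obtain ⟨b, hb⟩ :=
      ((countable_range f).bddAbove_of_aleph0_lt_cof hα).exists_isLUB_of_wellFoundedLT
    refine ⟨b, hb.isSuccLimit_of_notMem (range_nonempty f) ?_, hb.1 (mem_range_self 0)⟩
    rintro ⟨n, rfl⟩
    exact (hb.1 (mem_range_self (n + 1))).not_gt (hf n.lt_succ_self)

variable [IsRegularCardinalOrder α]

theorem isClub_diagInter (hα : ℵ₀ < cof α) {C : α → Set α} (hC : ∀ x, IsClub (C x)) :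
    IsClub {x | ∀ y < x, x ∈ C y} := by
  have := noMaxOrder_of_aleph0_lt_cof hα
  refine ⟨dirSupClosed_iff_of_linearOrder.2 fun d hd _ a ha y hy => ?_, fun a => ?_⟩
  · obtain ⟨b, hbd, hyb, -⟩ := ha.exists_between hy
    exact (hC y).isLUB_mem (t := d ∩ Ici b) (fun z hz => hd hz.1 y (hyb.trans_le hz.2))
      ⟨b, hbd, le_rfl⟩ (ha.inter_Ici_of_mem hbd)
  · have hclub (x : α) : IsClub (⋂ y : Iio x, C y) :=
      .iInter hα.ne' (by simpa using mk_Iio_lt x ord_cardinalMk) fun y => hC y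
    have hnext (x : α) : ∃ z, x < z ∧ ∀ y < x, z ∈ C y := by
      obtain ⟨c, hc⟩ := exists_gt x
      obtain ⟨z, hz, hcz⟩ := (hclub x).isCofinal c
      exact ⟨z, hc.trans_le hcz, fun y hy => mem_iInter.1 hz ⟨y, hy⟩⟩
    choose next hlt hmem using hnext
    set f : ℕ → α := fun n => next^[n] a
    have hsucc (n : ℕ) : f (n + 1) = next (f n) := Function.iterate_succ_apply' _ _ _
    have hf : StrictMono f := strictMono_nat_of_lt_succ fun n => hsucc n ▸ hlt (f n)
    obtain ⟨σ, hσ⟩ :=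
      ((countable_range f).bddAbove_of_aleph0_lt_cof hα).exists_isLUB_of_wellFoundedLT
    refine ⟨σ, fun y hy => ?_, hσ.1 (mem_range_self 0)⟩
    obtain ⟨_, ⟨n, rfl⟩, hyn⟩ := (lt_isLUB_iff hσ).1 hy
    refine (hC y).isLUB_mem (t := range f ∩ Ici (f (n + 1))) ?_ ⟨_, mem_range_self _, le_rfl⟩
      (hσ.inter_Ici_of_mem (mem_range_self _))
    rintro _ ⟨⟨m, rfl⟩, hm⟩
    obtain ⟨k, rfl⟩ := Nat.exists_eq_add_of_le (hf.le_iff_le.1 hm)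
    rw [show n + 1 + k = n + k + 1 by omega, hsucc]
    exact hmem _ y (hyn.trans_le (hf.monotone (by omega)))

theorem IsStationary.exists_isStationary_inter_preimage (hα : ℵ₀ < cof α) {s : Set α}
    (hs : IsStationary s) {f : α → α} (hf : ∀ x ∈ s, f x < x) :
    ∃ y, IsStationary (s ∩ f ⁻¹' {y}) := by
  by_contra! h
  simp_rw [not_isStationary_iff] at h
  choose C hC hdisj using h
  obtain ⟨x, hxs, hx⟩ := hs (isClub_diagInter hα hC)
  exact (hdisj (f x)).notMem_of_mem_left ⟨hxs, rfl⟩ (hx _ (hf x hxs))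

variable {W : Type*} {h : W → α}

theorem IsStationary.exists_isStationary_inter_fiber (hα : ℵ₀ < cof α)
    (hh : ∀ x, (h ⁻¹' {x}).Countable) {s : Set α} (hs : IsStationary s) {F : α → W}
    (hF : ∀ x ∈ s, h (F x) < x) : ∃ w, IsStationary (s ∩ F ⁻¹' {w}) := by
  obtain ⟨y, hy⟩ := hs.exists_isStationary_inter_preimage hα (f := h ∘ F) hF
  have hfiber : s ∩ (h ∘ F) ⁻¹' {y} = ⋃ w : h ⁻¹' {y}, s ∩ F ⁻¹' {w.1} := by
    ext x
    simp
  have := (hh y).to_subtype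
  rw [hfiber, isStationary_iUnion_iff_of_countable hα.ne'] at hy
  obtain ⟨w, hw⟩ := hy
  exact ⟨w, hw⟩

theorem IsStationary.exists_isStationary_setOf_forall_lt_eq (hα : ℵ₀ < cof α)
    (hh : ∀ x, (h ⁻¹' {x}).Countable) {s : Set α} (hs : IsStationary s) {F : ℕ → α → W}
    (hF : ∀ k, ∀ x ∈ s, h (F k x) < x) :
    ∃ w : ℕ → W, ∀ n, IsStationary {x ∈ s | ∀ k < n, F k x = w k} := by
  have step (k : ℕ) (t : {t : Set α // IsStationary t ∧ t ⊆ s}) :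
      ∃ w, IsStationary (t.1 ∩ F k ⁻¹' {w}) :=
    t.2.1.exists_isStationary_inter_fiber hα hh fun x hx => hF k x (t.2.2 hx)
  choose w hw using step
  let T : ℕ → {t : Set α // IsStationary t ∧ t ⊆ s} := fun n => Nat.rec ⟨s, hs, subset_rfl⟩
    (fun k t => ⟨t.1 ∩ F k ⁻¹' {w k t}, hw k t, inter_subset_left.trans t.2.2⟩) n
  refine ⟨fun k => w k (T k), fun n => (T n).2.1.mono ?_⟩
  induction n with
  | zero => exact fun x hx => ⟨hx, by simp⟩
  | succ n ih =>
    rintro x ⟨hxT, hxF⟩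
    refine ⟨(ih hxT).1, fun k hk => ?_⟩
    rcases (Nat.lt_succ_iff.1 hk).lt_or_eq with hk | rfl
    · exact (ih hxT).2 k hk
    · exact hxF

end Stationary

instance : IsRegularCardinalOrder (ω₁ : Ordinal.{u}).ToType where
  type_lt_le_ord_cof := by rw [type_toType, cof_toType, cof_omega_one, ord_aleph]

theorem aleph0_lt_cof_omega_one_toType : ℵ₀ < cof (ω₁ : Ordinal.{u}).ToType := by
  rw [cof_toType, cof_omega_one]
  exact aleph0_lt_aleph_one

theorem countable_Iio_omega_one_toType (ξ : (ω₁ : Ordinal.{u}).ToType) : (Iio ξ).Countable := by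
  rw [← le_aleph0_iff_set_countable, ← lt_aleph_one_iff, ← cof_omega_one, ← cof_toType,
    cof_eq_cardinalMk]
  exact mk_Iio_lt ξ ord_cardinalMk

class IsOrderTree (V : Type u) [PartialOrder V] : Prop where
  isChain_Iic (t : V) : IsChain (· ≤ ·) (Iic t)
  wellFoundedOn_Iic (t : V) : (Iic t).WellFoundedOn (· < ·)

namespace IsOrderTree

variable {V : Type u} [PartialOrder V] [IsOrderTree V]

theorem le_total_of_le {x y u : V} (hx : x ≤ u) (hy : y ≤ u) : x ≤ y ∨ y ≤ x := by
  rcases eq_or_ne x y with rfl | hne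
  · exact Or.inl le_rfl
  · exact isChain_Iic u hx hy hne

instance (v : V) : IsWellOrder (Iio v) (· < ·) where
  trichotomous a b hab hba := by
    rcases le_total_of_le a.2.le b.2.le with h | h
    · exact Subtype.ext (h.eq_of_not_lt hab)
    · exact Subtype.ext (h.eq_of_not_lt hba).symm
  wf := (wellFoundedOn_Iic v).subset fun _ hx => le_of_lt hx

noncomputable def height (v : V) : Ordinal.{u} := typeLT (Iio v)

def iioPrincipalSeg {x y : V} (h : x < y) : Iio x <i Iio y where
  toFun := inclusion fun _ hz => lt_trans hz h
  inj' := inclusion_injective _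
  map_rel_iff' := Iff.rfl
  top := ⟨x, h⟩
  mem_range_iff_rel' b := ⟨by rintro ⟨a, rfl⟩; exact a.2, fun hb => ⟨⟨b.1, hb⟩, rfl⟩⟩

theorem height_eq_typein {x y : V} (h : x < y) :
    height x = typein (α := Iio y) (· < ·) ⟨x, h⟩ :=
  (typein_top (iioPrincipalSeg h)).symm

theorem height_strictMono : StrictMono (height : V → Ordinal) := fun _ _ h => by
  rw [height_eq_typein h]
  exact typein_lt_type (α := Iio _) _ _

theorem exists_lt_height_eq {y : V} {o : Ordinal} (h : o < height y) :
    ∃ x < y, height x = o := by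
  obtain ⟨a, rfl⟩ := typein_surj (α := Iio y) _ h
  exact ⟨a.1, a.2, height_eq_typein a.2⟩

theorem lt_of_height_lt {x y u : V} (hx : x ≤ u) (hy : y ≤ u) (h : height x < height y) :
    x < y := by
  rcases le_total_of_le hx hy with h' | h'
  · exact h'.lt_of_ne (by rintro rfl; exact h.false)
  · exact absurd (height_strictMono.monotone h') h.not_ge

theorem height_lt_omega_one (hc : ∀ C : Set V, IsChain (· ≤ ·) C → C.Countable) (v : V) :
    height v < ω₁ := by
  rw [← ord_aleph, lt_ord, height, card_type, lt_aleph_one_iff, le_aleph0_iff_set_countable]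
  exact hc _ ((isChain_Iic v).mono Iio_subset_Iic_self)

-- Heights are read in the well-order `ω₁.ToType`, where clubs and stationary sets are taken.
noncomputable def countableHeight (hc : ∀ C : Set V, IsChain (· ≤ ·) C → C.Countable) (v : V) :
    (ω₁ : Ordinal.{u}).ToType :=
  ToType.mk ⟨height v, height_lt_omega_one hc v⟩

variable {hc : ∀ C : Set V, IsChain (· ≤ ·) C → C.Countable}

theorem countableHeight_lt_countableHeight {x y : V} :
    countableHeight hc x < countableHeight hc y ↔ height x < height y := by
  rw [countableHeight, countableHeight, OrderIso.lt_iff_lt]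
  exact Iff.rfl

theorem countableHeight_strictMono : StrictMono (countableHeight hc) := fun _ _ h =>
  countableHeight_lt_countableHeight.2 (height_strictMono h)

theorem lt_of_countableHeight_lt {x y u : V} (hx : x ≤ u) (hy : y ≤ u)
    (h : countableHeight hc x < countableHeight hc y) : x < y :=
  lt_of_height_lt hx hy (countableHeight_lt_countableHeight.1 h)

theorem exists_lt_countableHeight_eq {y : V} {ξ : (ω₁ : Ordinal.{u}).ToType}
    (h : ξ < countableHeight hc y) : ∃ x < y, countableHeight hc x = ξ := by
  obtain ⟨x, hxy, hx⟩ := exists_lt_height_eq (o := (ToType.mk.symm ξ).1) (y := y) <| by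
    simpa [countableHeight, ← Subtype.coe_lt_coe] using ToType.mk.symm.lt_iff_lt.2 h
  exact ⟨x, hxy, by simp [countableHeight, hx]⟩

theorem countable_countableHeight_fiber
    (hlevel : ∀ t : V, {s : V | Nonempty (↥(Iio s) ≃o ↥(Iio t))}.Countable)
    (ξ : (ω₁ : Ordinal.{u}).ToType) : (countableHeight hc ⁻¹' {ξ}).Countable := by
  rcases (countableHeight hc ⁻¹' {ξ}).eq_empty_or_nonempty with h | ⟨t, rfl⟩
  · simp [h]
  refine (hlevel t).mono fun s hs => ?_
  obtain ⟨e⟩ := type_eq.1 (by simpa [countableHeight, Subtype.ext_iff] using hs :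
    height s = height t)
  exact ⟨.ofRelIsoLT e⟩

theorem countableHeight_surjective
    (hlevel : ∀ t : V, {s : V | Nonempty (↥(Iio s) ≃o ↥(Iio t))}.Countable)
    (huncount : ¬ (univ : Set V).Countable) : Function.Surjective (countableHeight hc) := by
  intro ξ
  by_contra! h
  refine huncount (((countable_Iio_omega_one_toType ξ).biUnion fun η _ =>
    countable_countableHeight_fiber (hc := hc) hlevel η).mono fun v _ => ?_)
  rcases lt_or_ge (countableHeight hc v) ξ with hv | hv
  · exact mem_biUnion hv rfl
  · obtain ⟨x, -, hx⟩ := exists_lt_countableHeight_eq (hv.lt_of_ne (h v).symm)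
    exact absurd hx (h x)

theorem exists_between_of_isSuccLimit_countableHeight {u : V}
    (hu : IsSuccLimit (countableHeight hc u)) :
    (∃ x, x < u) ∧ ∀ x < u, ∃ z, x < z ∧ z < u := by
  refine ⟨?_, fun x hx => ?_⟩
  · obtain ⟨η, hη⟩ := not_isMin_iff.1 hu.not_isMin
    obtain ⟨x, hx, -⟩ := exists_lt_countableHeight_eq hη
    exact ⟨x, hx⟩
  · obtain ⟨η, hηu, hxη⟩ := hu.lt_iff_exists_lt.1 (countableHeight_strictMono hx)
    obtain ⟨z, hzu, rfl⟩ := exists_lt_countableHeight_eq hηu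
    exact ⟨z, lt_of_countableHeight_lt hx.le hzu.le hxη, hzu⟩

end IsOrderTree

theorem exists_injective_forall_mem_of_mk_le_aleph_one {ι W : Type*} (hι : #ι ≤ ℵ₁)
    {P : ι → Set W} (hP : ∀ i, ¬ (P i).Countable) :
    ∃ f : ι → W, Function.Injective f ∧ ∀ i, f i ∈ P i := by
  obtain ⟨_, _, hord⟩ := Cardinal.exists_ord_eq_type_lt ι
  have hfresh (i : ι) (g : Iio i → W) : (P i \ range g).Nonempty := by
    have : Countable (Iio i) :=
      mk_le_aleph0_iff.1 (lt_aleph_one_iff.1 ((mk_Iio_lt i hord).trans_le hι))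
    rw [nonempty_iff_ne_empty, Ne, sdiff_eq_empty]
    exact fun h => hP i ((countable_range g).mono h)
  let f : ι → W := wellFounded_lt.fix fun i g => (hfresh i fun j => g j.1 j.2).some
  have hf (i : ι) : f i ∈ P i \ range fun j : Iio i => f j := by
    rw [show f i = _ from wellFounded_lt.fix_eq _ i]
    exact (hfresh i _).some_mem
  refine ⟨f, fun i j hij => ?_, fun i => (hf i).1⟩
  by_contra hne
  rcases lt_or_gt_of_ne hne with h | h
  · exact (hf j).2 ⟨⟨i, h⟩, hij⟩
  · exact (hf i).2 ⟨⟨j, h⟩, hij.symm⟩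

namespace SimpleGraph

variable {V : Type u}

theorem hasFatTKAleph0_of_uncountable_common_neighbours {G : SimpleGraph V} {b : ℕ → V}
    (hb : Function.Injective b) {P : ℕ → Set V} (hP : ∀ j, ¬ (P j).Countable)
    (hadj : ∀ j, ∀ v ∈ P j, ∀ i ≤ j, G.Adj (b i) v) (hPb : ∀ j, Disjoint (P j) (range b)) :
    HasFatTKAleph0 G := by
  obtain ⟨Φ, hΦ, hΦP⟩ := exists_injective_forall_mem_of_mk_le_aleph_one
    (ι := ℕ × ℕ × (ℵ₁ : Cardinal.{0}).out) (by simp) (P := fun t => P t.2.1) fun t => hP _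
  have hΦb (i j : ℕ) (α) (k : ℕ) : Φ (i, j, α) ≠ b k :=
    fun h => (hPb j).notMem_of_mem_left (hΦP (i, j, α)) ⟨k, h.symm⟩
  let path (i j : ℕ) (h : i < j) (α) : G.Walk (b i) (b j) :=
    .cons (hadj j _ (hΦP (i, j, α)) i h.le) (.cons (hadj j _ (hΦP (i, j, α)) j le_rfl).symm .nil)
  have hsupp (i j : ℕ) (h : i < j) (α) (w : V) :
      w ∈ (path i j h α).support ↔ w = b i ∨ w = Φ (i, j, α) ∨ w = b j := by
    simp [path]
  refine ⟨⟨b, hb, _, mk_out _, path, fun i j h α => ?_, fun i j h α k hk => ?_,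
    fun i j h α i' j' h' α' hne w hw hw' => ?_, fun i j h α α' hne heq => ?_⟩⟩
  · simp [path, hΦb, hb.ne h.ne, (hΦb i j α i).symm]
  · rw [hsupp i j h α] at hk
    grind [hb.eq_iff]
  · rw [hsupp i j h α] at hw
    rw [hsupp i' j' h' α'] at hw'
    have := hΦ.ne hne
    grind
  · have := congrArg (·.getVert 1) heq
    simp only [path, Walk.getVert_cons_succ, Walk.getVert_zero] at this
    exact hne (by simpa using hΦ this)

theorem exists_strictMono_adj_lt [PartialOrder V] {X : SimpleGraph V}
    (hcof : ∀ ⦃x y : V⦄, x < y → ∃ x' : V, X.Adj y x' ∧ x ≤ x' ∧ x' < y) {u : V}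
    (hne : ∃ x, x < u) (hdense : ∀ x < u, ∃ z, x < z ∧ z < u) :
    ∃ g : ℕ → V, StrictMono g ∧ ∀ k, X.Adj u (g k) ∧ g k < u := by
  let N := {x | X.Adj u x ∧ x < u}
  have : Nonempty N := by
    obtain ⟨x, hx⟩ := hne
    obtain ⟨x', hadj, -, hlt⟩ := hcof hx
    exact ⟨⟨x', hadj, hlt⟩⟩
  have : NoMaxOrder N := ⟨fun x => by
    obtain ⟨z, hxz, hzu⟩ := hdense x.1 x.2.2
    obtain ⟨x', hadj, hzx', hlt⟩ := hcof hzu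
    exact ⟨⟨x', hadj, hlt⟩, hxz.trans_le hzx'⟩⟩
  obtain ⟨g, hg⟩ := Nat.exists_strictMono N
  exact ⟨fun k => g k, (Subtype.strictMono_coe _).comp hg, fun k => (g k).2⟩

end SimpleGraph

namespace IsATGraph

open IsOrderTree

variable {V : Type u} [PartialOrder V] {X : SimpleGraph V}

theorem exists_uncountable_common_neighbours (hX : IsATGraph X) :
    ∃ b : ℕ → V, Function.Injective b ∧ ∃ P : ℕ → Set V, (∀ j, ¬ (P j).Countable) ∧
      (∀ j, ∀ v ∈ P j, ∀ i ≤ j, X.Adj (b i) v) ∧ ∀ j, Disjoint (P j) (range b) := by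
  obtain ⟨⟨-, hchain, hwf, huncount, hc, hlevel⟩, -, hcof⟩ := hX
  have : IsOrderTree V := ⟨hchain, hwf⟩
  have hα := aleph0_lt_cof_omega_one_toType.{u}
  have := nonempty_of_aleph0_lt_cof hα
  have := noMaxOrder_of_aleph0_lt_cof hα
  choose t ht using countableHeight_surjective (hc := hc) hlevel huncount
  have hseq (ξ : (ω₁ : Ordinal.{u}).ToType) : ∃ g : ℕ → V, IsSuccLimit ξ →
      StrictMono g ∧ ∀ k, X.Adj (t ξ) (g k) ∧ g k < t ξ := by
    by_cases hξ : IsSuccLimit ξ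
    · rw [← ht ξ] at hξ
      obtain ⟨hne, hdense⟩ := exists_between_of_isSuccLimit_countableHeight hξ
      obtain ⟨g, hg⟩ := SimpleGraph.exists_strictMono_adj_lt hcof hne hdense
      exact ⟨g, fun _ => hg⟩
    · exact ⟨fun _ => t ξ, fun h => absurd h hξ⟩
  choose F hF using hseq
  have hlim := (isClub_setOf_isSuccLimit hα).isStationary hα.ne'
  obtain ⟨b, hb⟩ := hlim.exists_isStationary_setOf_forall_lt_eq hα
    (countable_countableHeight_fiber (hc := hc) hlevel) (F := fun k ξ => F ξ k) fun k ξ hξ => by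
      simpa [ht] using countableHeight_strictMono (hc := hc) ((hF ξ hξ).2 k).2
  have hbmono : StrictMono b := fun i j hij => by
    obtain ⟨ξ, hξ, hFξ⟩ := (hb (j + 1)).nonempty
    rw [← hFξ i (by omega), ← hFξ j (by omega)]
    exact (hF ξ hξ).1 hij
  obtain ⟨β, hβ⟩ := (countable_range (countableHeight hc ∘ b)).bddAbove_of_aleph0_lt_cof hα
  set Z := fun n => {ξ | IsSuccLimit ξ ∧ ∀ k < n, F ξ k = b k}
  refine ⟨b, hbmono.injective, fun j => t '' (Z (j + 1) ∩ Ioi β), fun j hcount => ?_, ?_,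
    fun j => ?_⟩
  · refine (hb (j + 1)).inter_isClub hα (isClub_Ioi β) |>.not_countable hα ?_
    simpa [Z, image_image, ht] using hcount.image (countableHeight hc)
  · rintro j _ ⟨ξ, ⟨⟨hξ, hFξ⟩, -⟩, rfl⟩ i hij
    rw [← hFξ i (by omega)]
    exact ((hF ξ hξ).2 i).1.symm
  · rw [disjoint_left]
    rintro _ ⟨ξ, ⟨-, hβξ⟩, rfl⟩ ⟨k, hk⟩
    have := hβ ⟨k, rfl⟩
    simp only [Function.comp_apply, hk, ht] at this
    exact hβξ.not_ge this

end IsATGraph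

/-- Every Aronszajn-tree graph contains a fat `TK_ℵ0`. -/
theorem stmt9 {V : Type u} [PartialOrder V] (X : SimpleGraph V) (hX : IsATGraph X) :
    HasFatTKAleph0 X := by
  obtain ⟨b, hb, P, hP, hadj, hPb⟩ := hX.exists_uncountable_common_neighbours
  exact SimpleGraph.hasFatTKAleph0_of_uncountable_common_neighbours hb hP hadj hPb
end

section
/- Every graph H that is an IX for some Aronszajn-tree graph X contains a fat TK_ℵ0 as a subgraph. -/
universe u v

/-!
Write `π : V(H) → V(X)` for the map sending a vertex to its branch set. Delete from `H` the branch
sets of finitely many tree nodes `B`. Walking down the tree along edges of `X`, every other node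
reaches the root or a node covering an element of `B`; levels of an Aronszajn tree are countable,
so there are only countably many such nodes and uncountably many branch sets lie in one component
of what is left. In any graph, among uncountably many vertices of one component, uncountably many
are the ends of a fan of paths from a single centre. Iterating, with `B` the branch sets of the centres
found so far, gives distinct centres `w₀, w₁, …` with nested uncountable sets of ends. Two centres
are joined through a common end, and a countable set meets only countably many paths of a fan, so
these joins can avoid any countable set. Hence every countable family of pairwise internally
disjoint `TK_ℵ0`s on the branch vertices `wᵢ` extends by one more, and a maximal such family is
uncountable: ℵ₁ of its members form the fat `TK_ℵ0`.
-/

open Set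

theorem exists_maximal_pairwise {α : Type*} (s : Set α) (r : α → α → Prop)
    (hr : ∀ x y, r x y → r y x) :
    ∃ F ⊆ s, F.Pairwise r ∧ ∀ x ∈ s, (∀ y ∈ F, x ≠ y → r x y) → x ∈ F := by
  obtain ⟨F, hF⟩ := zorn_subset {F | F ⊆ s ∧ F.Pairwise r} fun c hc hchain =>
    ⟨⋃₀ c, ⟨sUnion_subset fun F hF => (hc hF).1, hchain.pairwise_sUnion.2 fun F hF => (hc hF).2⟩,
      fun _ => subset_sUnion_of_mem⟩
  refine ⟨F, hF.prop.1, hF.prop.2, fun x hx hxr => hF.mem_of_prop_insert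
    ⟨insert_subset hx hF.prop.1,
      hF.prop.2.insert fun y hy hxy => ⟨hxr y hy hxy, hr _ _ (hxr y hy hxy)⟩⟩⟩

theorem exists_uncountable_pairwise {α : Type*} (s : Set α) (r : α → α → Prop)
    (hr : ∀ x y, r x y → r y x)
    (hext : ∀ F ⊆ s, F.Countable → F.Pairwise r → ∃ x ∈ s, x ∉ F ∧ ∀ y ∈ F, r x y) :
    ∃ F ⊆ s, ¬ F.Countable ∧ F.Pairwise r := by
  obtain ⟨F, hFs, hF, hmax⟩ := exists_maximal_pairwise s r hr
  refine ⟨F, hFs, fun hc => ?_, hF⟩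
  obtain ⟨x, hx, hxF, hxr⟩ := hext F hFs hc hF
  exact hxF (hmax x hx fun y hy _ => hxr y hy)

theorem Set.nonempty_aleph_one_embedding {α : Type*} {s : Set α} (hs : ¬ s.Countable) :
    Nonempty ((Cardinal.aleph 1).out ↪ s) := by
  rw [← Cardinal.lift_mk_le', Cardinal.mk_out, Cardinal.lift_aleph, Ordinal.lift_one,
    Cardinal.aleph_one_le_iff, Cardinal.aleph0_lt_lift, ← not_le,
    Cardinal.le_aleph0_iff_set_countable]
  exact hs

namespace SimpleGraph

variable {V : Type*} {G : SimpleGraph V}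

/-- Unlike `G.induce A`, this keeps the vertex type, so that walks map back to `G` by
`Walk.mapLe`. -/
@[reducible]
def restrict (G : SimpleGraph V) (A : Set V) : SimpleGraph V where
  Adj a b := G.Adj a b ∧ a ∈ A ∧ b ∈ A
  symm := ⟨fun _ _ h => ⟨h.1.symm, h.2.2, h.2.1⟩⟩
  loopless := ⟨fun a h => G.loopless.irrefl a h.1⟩

theorem restrict_le (A : Set V) : G.restrict A ≤ G := fun _ _ h => h.1

namespace Walk

variable {a b a' b' c d : V}

theorem start_mem_of_restrict {A : Set V} (p : (G.restrict A).Walk a b) (hab : a ≠ b) : a ∈ A := by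
  cases p with
  | nil => exact absurd rfl hab
  | cons h _ => exact h.2.1

def InternallyDisjoint (p : G.Walk a b) (q : G.Walk c d) : Prop :=
  ∀ v ∈ p.support, v ∈ q.support → (v = a ∨ v = b) ∧ (v = c ∨ v = d)

theorem InternallyDisjoint.symm {p : G.Walk a b} {q : G.Walk c d} (h : p.InternallyDisjoint q) :
    q.InternallyDisjoint p :=
  fun v hq hp => (h v hp hq).symm

def AvoidsInternally (p : G.Walk a b) (Z : Set V) : Prop :=
  ∀ v ∈ p.support, v ∈ Z → v = a ∨ v = b

theorem AvoidsInternally.mono {p : G.Walk a b} {Z Z' : Set V} (h : p.AvoidsInternally Z)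
    (hZ : Z' ⊆ Z) : p.AvoidsInternally Z' :=
  fun v hv hvZ => h v hv (hZ hvZ)

theorem internallyDisjoint_of_avoidsInternally {p : G.Walk a b} {q : G.Walk c d} {R : Set V}
    (ha : a ∈ R) (hb : b ∈ R) (hp : p.AvoidsInternally {v | v ∈ q.support})
    (hq : q.AvoidsInternally R) : p.InternallyDisjoint q := by
  intro v hvp hvq
  have hv := hp v hvp hvq
  exact ⟨hv, hq v hvq (hv.elim (· ▸ ha) (· ▸ hb))⟩

theorem avoidsInternally_copy (p : G.Walk a b) (ha : a = a') (hb : b = b') (Z : Set V) :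
    (p.copy ha hb).AvoidsInternally Z ↔ p.AvoidsInternally Z := by
  subst ha hb
  rfl

theorem internallyDisjoint_copy (p : G.Walk a b) (ha : a = a') (hb : b = b') (q : G.Walk c d) :
    (p.copy ha hb).InternallyDisjoint q ↔ p.InternallyDisjoint q := by
  subst ha hb
  rfl

theorem copy_internallyDisjoint (p : G.Walk a b) (q : G.Walk c d) (hc : c = a') (hd : d = b') :
    p.InternallyDisjoint (q.copy hc hd) ↔ p.InternallyDisjoint q := by
  subst hc hd
  rfl

theorem mem_edges_of_length_eq_one {p : G.Walk a b} (h : p.length = 1) : s(a, b) ∈ p.edges := by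
  cases p with
  | nil => simp at h
  | cons _ q => cases q with
    | nil => simp
    | cons => simp at h

theorem IsPath.exists_mem_support_ne {p : G.Walk a b} (hp : p.IsPath) (h : 2 ≤ p.length) :
    ∃ v ∈ p.support, v ≠ a ∧ v ≠ b := by
  refine ⟨p.getVert 1, p.getVert_mem_support 1, fun h1 => ?_, fun h1 => ?_⟩
  · exact one_ne_zero (hp.getVert_injOn (by simp; omega) (by simp) (h1.trans p.getVert_zero.symm))
  · exact (show 1 ≠ p.length by omega)
      (hp.getVert_injOn (by simp; omega) (by simp) (h1.trans p.getVert_length.symm))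

theorem two_le_length_bypass_append [DecidableEq V] {p : G.Walk a c} {q : G.Walk c b}
    (hb : b ∉ p.support) (ha : a ∉ q.support) : 2 ≤ (p.append q).bypass.length := by
  by_contra! hlen
  interval_cases hr : (p.append q).bypass.length
  · exact ha (eq_of_length_eq_zero hr ▸ q.end_mem_support)
  · have := (p.append q).edges_bypass_subset_edges (mem_edges_of_length_eq_one hr)
    rw [edges_append, List.mem_append] at this
    exact this.elim (fun h => hb (p.snd_mem_support_of_mem_edges h))
      (fun h => ha (q.fst_mem_support_of_mem_edges h))

end Walk

theorem restrict_reachable_of_reachable {W : Type*} {H : SimpleGraph W} {X : SimpleGraph V}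
    (π : W → V) (hconn : ∀ x, (H.induce (π ⁻¹' {x})).Connected)
    (hadj : ∀ x y, X.Adj x y → ∃ a b, π a = x ∧ π b = y ∧ H.Adj a b) {S : Set V} {a b : W}
    (ha : π a ∈ S) (h : (X.restrict S).Reachable (π a) (π b)) :
    (H.restrict (π ⁻¹' S)).Reachable a b := by
  have hfiber {x : V} (hx : x ∈ S) {a a' : W} (ha : π a = x) (ha' : π a' = x) :
      (H.restrict (π ⁻¹' S)).Reachable a a' := by
    have hS (u : π ⁻¹' {x}) : π u ∈ S := by
      rw [show π u = x from u.2]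
      exact hx
    let incl : H.induce (π ⁻¹' {x}) →g H.restrict (π ⁻¹' S) :=
      ⟨Subtype.val, fun {u v} huv => ⟨huv, hS u, hS v⟩⟩
    exact ((hconn x).preconnected ⟨a, ha⟩ ⟨a', ha'⟩).map incl
  obtain ⟨p⟩ := h
  suffices ∀ x y (p : (X.restrict S).Walk x y) a b, π a = x → π b = y → x ∈ S →
      (H.restrict (π ⁻¹' S)).Reachable a b from this _ _ p a b rfl rfl ha
  intro x y p
  induction p with
  | nil => exact fun a b ha hb hx => hfiber hx ha hb
  | cons hxz _ ih =>
    intro a b ha hb hx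
    obtain ⟨a', b', ha', hb', hab'⟩ := hadj _ _ hxz.1
    have hab'S : (H.restrict (π ⁻¹' S)).Adj a' b' := ⟨hab', show π a' ∈ S from ha' ▸ hx,
      show π b' ∈ S from hb' ▸ hxz.2.2⟩
    exact (hfiber hx ha ha').trans <| hab'S.reachable.trans <| ih b' b hb' hb hxz.2.2

structure IsFan (G : SimpleGraph V) (w : V) (N : Set V) (P : ∀ u ∈ N, G.Walk w u) : Prop where
  center_notMem : w ∉ N
  isPath : ∀ u hu, (P u hu).IsPath
  eq_center : ∀ u hu u' hu', u ≠ u' → ∀ v ∈ (P u hu).support, v ∈ (P u' hu').support → v = w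

namespace IsFan

variable {w : V} {N : Set V} {P : ∀ u ∈ N, G.Walk w u}

theorem mapLe {G' : SimpleGraph V} (h : G ≤ G') (hP : G.IsFan w N P) :
    G'.IsFan w N fun u hu => (P u hu).mapLe h where
  center_notMem := hP.center_notMem
  isPath u hu := (Walk.isPath_mapLe h).2 (hP.isPath u hu)
  eq_center u hu u' hu' hne v hv hv' := hP.eq_center u hu u' hu' hne v
    (by simpa using hv) (by simpa using hv')

theorem countable_setOf_meets (hP : G.IsFan w N P) {Z : Set V} (hZ : Z.Countable) (hw : w ∉ Z) :
    {u | ∃ hu : u ∈ N, ∃ v ∈ (P u hu).support, v ∈ Z}.Countable := by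
  refine (hZ.biUnion fun v hv => Set.Subsingleton.countable
    (s := {u | ∃ hu : u ∈ N, v ∈ (P u hu).support}) ?_).mono ?_
  · rintro u ⟨hu, hvu⟩ u' ⟨hu', hvu'⟩
    by_contra hne
    exact hw (hP.eq_center u hu u' hu' hne v hvu hvu' ▸ hv)
  · rintro u ⟨hu, v, hv, hvZ⟩
    exact mem_biUnion hvZ ⟨hu, hv⟩

end IsFan

theorem exists_isFan_of_pairwise {w : V} (F : Set (Σ u, G.Walk w u))
    (hF : ∀ e ∈ F, e.1 ≠ w ∧ e.2.IsPath)
    (hpw : F.Pairwise fun e e' => ∀ v ∈ e.2.support, v ∈ e'.2.support → v = w) :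
    InjOn Sigma.fst F ∧ ∃ P, G.IsFan w (Sigma.fst '' F) P := by
  have hinj : InjOn Sigma.fst F := fun e he e' he' h => by
    by_contra hne
    exact (hF e he).1
      (hpw he he' hne e.1 e.2.end_mem_support (by rw [h]; exact e'.2.end_mem_support))
  choose e he hef using fun u (hu : u ∈ Sigma.fst '' F) => hu
  refine ⟨hinj, fun u hu => (e u hu).2.copy rfl (hef u hu), ?_, ?_, ?_⟩
  · rintro ⟨e', he', hw⟩
    exact (hF e' he').1 hw
  · intro u hu
    simpa using (hF _ (he u hu)).2
  · intro u hu u' hu' hne v hv hv'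
    rw [Walk.support_copy] at hv hv'
    exact hpw (he u hu) (he u' hu') (fun h => hne (by rw [← hef u hu, ← hef u' hu', h])) v hv hv'

/-- Take `w` whose ball of the least possible radius `n` contains uncountably many vertices of `M`.
Balls of radius `n - 1` catch only countably many, and a walk of length `≤ n` from `w` through
`z ≠ w` continues from `z` by a walk of length `< n`. -/
theorem exists_uncountably_reachable_avoiding (M : Set V) (hM : ¬ M.Countable) (b : V)
    (hb : ∀ u ∈ M, G.Reachable b u) :
    ∃ w, ∀ Z : Set V, Z.Countable → w ∉ Z →
      ¬ {u ∈ M | ∃ p : G.Walk w u, p.IsPath ∧ ∀ v ∈ p.support, v ∉ Z}.Countable := by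
  classical
  let ball (v : V) (n : ℕ) : Set V := {u | ∃ p : G.Walk v u, p.length ≤ n}
  have hex : ∃ n, ∃ v, ¬ (M ∩ ball v n).Countable := by
    by_contra! h
    exact hM ((countable_iUnion fun n => h n b).mono fun u hu =>
      mem_iUnion_of_mem _ (⟨hu, (hb u hu).some, le_rfl⟩ : u ∈ M ∩ ball b _))
  obtain ⟨w, hw⟩ := Nat.find_spec hex
  have hpos : Nat.find hex ≠ 0 := fun h0 => hw <| (countable_singleton w).mono
    fun u ⟨_, p, hp⟩ => (Walk.eq_of_length_eq_zero (p := p) (by omega)).symm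
  have hmin : ∀ v, (M ∩ ball v (Nat.find hex - 1)).Countable := fun v => by
    by_contra h
    exact Nat.find_min hex (by omega) ⟨v, h⟩
  refine ⟨w, fun Z hZ hwZ hc => hw ((hc.union (hZ.biUnion fun z _ => hmin z)).mono ?_)⟩
  rintro u ⟨huM, p, hp⟩
  by_cases hz : ∃ z ∈ p.support, z ∈ Z
  · obtain ⟨z, hzp, hzZ⟩ := hz
    have := Walk.length_dropUntil_lt_length hzp (fun h => hwZ (h ▸ hzZ))
    exact Or.inr (mem_biUnion hzZ ⟨huM, p.dropUntil z hzp, by omega⟩)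
  · push Not at hz
    exact Or.inl ⟨huM, p.bypass, p.bypass_isPath,
      fun v hv => hz v (p.support_bypass_subset_support hv)⟩

theorem exists_isFan_of_reachable (M : Set V) (hM : ¬ M.Countable) (b : V)
    (hb : ∀ u ∈ M, G.Reachable b u) :
    ∃ w N P, N ⊆ M ∧ ¬ N.Countable ∧ G.IsFan w N P := by
  obtain ⟨w, hw⟩ := exists_uncountably_reachable_avoiding M hM b hb
  let fanPaths := {e : Σ u, G.Walk w u | e.1 ∈ M ∧ e.1 ≠ w ∧ e.2.IsPath}
  let meetOnlyAtCenter (e e' : Σ u, G.Walk w u) := ∀ v ∈ e.2.support, v ∈ e'.2.support → v = w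
  have hext : ∀ F ⊆ fanPaths, F.Countable → F.Pairwise meetOnlyAtCenter →
      ∃ e ∈ fanPaths, e ∉ F ∧ ∀ e' ∈ F, meetOnlyAtCenter e e' := by
    intro F _ hFc _
    set Z := (⋃ e ∈ F, {v | v ∈ e.2.support}) \ {w}
    have hZ : Z.Countable :=
      (hFc.biUnion fun e _ => e.2.support.finite_toSet.countable).mono sdiff_subset
    obtain ⟨u, ⟨huM, p, hp, hpZ⟩, huZ⟩ := sdiff_nonempty.2 fun h =>
      hw Z hZ (fun h => h.2 rfl) ((hZ.union (countable_singleton w)).mono h)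
    have huw : u ≠ w := fun h => huZ (Or.inr h)
    refine ⟨⟨u, p⟩, ⟨huM, huw, hp⟩, fun he => huZ (Or.inl ⟨mem_biUnion he p.end_mem_support, huw⟩),
      fun e he v hv hv' => ?_⟩
    by_contra hvw
    exact hpZ v hv ⟨mem_biUnion he hv', hvw⟩
  obtain ⟨F, hFs, hFc, hpw⟩ :=
    exists_uncountable_pairwise fanPaths meetOnlyAtCenter (fun e e' h v hv hv' => h v hv' hv) hext
  obtain ⟨hinj, P, hP⟩ := exists_isFan_of_pairwise F (fun e he => (hFs he).2) hpw
  exact ⟨w, _, P, image_subset_iff.2 fun e he => (hFs he).1,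
    fun hc => hFc ((mapsTo_image _ _).countable_of_injOn hinj hc), hP⟩

/-- `2 ≤ length` gives each path an inner vertex, which tells apart distinct `TK_ℵ0`s whose paths
are internally disjoint. -/
structure IsTK (b : ℕ → V) (P : ∀ i j, i < j → G.Walk (b i) (b j)) : Prop where
  isPath : ∀ i j h, (P i j h).IsPath
  two_le_length : ∀ i j h, 2 ≤ (P i j h).length
  avoidsInternally_branch : ∀ i j h, (P i j h).AvoidsInternally (range b)
  internallyDisjoint : ∀ i j h i' j' h', (i, j) ≠ (i', j') →
    (P i j h).InternallyDisjoint (P i' j' h')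

structure NestedFans (G : SimpleGraph V) where
  center : ℕ → V
  ends : ℕ → Set V
  path : ∀ k, ∀ u ∈ ends k, G.Walk (center k) u
  center_injective : Function.Injective center
  ends_antitone : Antitone ends
  ends_uncountable : ∀ k, ¬ (ends k).Countable
  isFan : ∀ k, G.IsFan (center k) (ends k) (path k)

theorem nonempty_nestedFans_of_step (good : Set V → Prop) (hgood : ∀ N, good N → ¬ N.Countable)
    (hstep : ∀ (C : Finset V) (N₀ : Set V), good N₀ →
      ∃ w ∉ C, ∃ N ⊆ N₀, good N ∧ ∃ P, G.IsFan w N P)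
    (N₀ : Set V) (hN₀ : good N₀) : Nonempty G.NestedFans := by
  classical
  choose w hwC N hN hNgood P hP using hstep
  let next (x : {x : Finset V × Set V // good x.2}) : {x : Finset V × Set V // good x.2} :=
    ⟨(insert (w x.1.1 x.1.2 x.2) x.1.1, N x.1.1 x.1.2 x.2), hNgood _ _ _⟩
  let stage (k : ℕ) := next^[k] ⟨(∅, N₀), hN₀⟩
  have hstage k : stage (k + 1) = next (stage k) := Function.iterate_succ_apply' _ _ _
  let center k := w (stage k).1.1 (stage k).1.2 (stage k).2
  have hused : ∀ j k, j < k → center j ∈ (stage k).1.1 := by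
    intro j k hjk
    induction k with
    | zero => omega
    | succ k ih =>
      rw [hstage]
      rcases Nat.lt_succ_iff_lt_or_eq.1 hjk with h | rfl
      · exact Finset.mem_insert_of_mem (ih h)
      · exact Finset.mem_insert_self _ _
  refine ⟨⟨center, fun k => N _ _ (stage k).2, fun k => P _ _ (stage k).2, ?_, ?_,
    fun k => hgood _ (hNgood _ _ _), fun k => hP _ _ _⟩⟩
  · intro j k h
    by_contra hne
    rcases Nat.lt_or_gt_of_ne hne with hjk | hkj
    · exact hwC _ _ (stage k).2 (h ▸ hused j k hjk)
    · exact hwC _ _ (stage j).2 (h.symm ▸ hused k j hkj)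
  · refine antitone_nat_of_succ_le fun k => ?_
    have := hN (stage (k + 1)).1.1 (stage (k + 1)).1.2 (stage (k + 1)).2
    rwa [hstage] at this ⊢

namespace NestedFans

variable (F : G.NestedFans)

/-- Join the two centres through a common end whose fan paths avoid `Z` and the other centres;
only countably many ends are excluded. -/
theorem exists_path_avoiding {i j : ℕ} (hij : i < j) {Z : Set V} (hZ : Z.Countable) :
    ∃ p : G.Walk (F.center i) (F.center j), p.IsPath ∧ 2 ≤ p.length ∧
      p.AvoidsInternally (Z ∪ range F.center) := by
  classical
  set Y := Z ∪ range F.center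
  have hY : Y.Countable := hZ.union (countable_range _)
  have hbad := fun k => (F.isFan k).countable_setOf_meets (hY.mono sdiff_subset)
    (show F.center k ∉ Y \ {F.center k} from fun h => h.2 rfl)
  obtain ⟨u, huj, hu⟩ := sdiff_nonempty.2 fun h =>
    F.ends_uncountable j (((hbad i).union (hbad j)).mono h)
  have hui : u ∈ F.ends i := F.ends_antitone hij.le huj
  set p := F.path i u hui
  set q := F.path j u huj
  have hp : ∀ v ∈ p.support, v ∈ Y → v = F.center i := fun v hv hvY => by
    by_contra h
    exact hu (Or.inl ⟨hui, v, hv, hvY, h⟩)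
  have hq : ∀ v ∈ q.support, v ∈ Y → v = F.center j := fun v hv hvY => by
    by_contra h
    exact hu (Or.inr ⟨huj, v, hv, hvY, h⟩)
  have hne : F.center i ≠ F.center j := F.center_injective.ne hij.ne
  refine ⟨(p.append q.reverse).bypass, Walk.bypass_isPath _,
    Walk.two_le_length_bypass_append (fun h => hne (hp _ h (Or.inr ⟨j, rfl⟩)).symm)
      (fun h => hne (hq _ (by simpa using h) (Or.inr ⟨i, rfl⟩))), fun v hv hvY => ?_⟩
  rcases (Walk.mem_support_append_iff _ _).1 (Walk.support_bypass_subset_support _ hv) with h | h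
  · exact Or.inl (hp v h hvY)
  · exact Or.inr (hq v (by simpa using h) hvY)

theorem exists_isTK_avoiding {Z : Set V} (hZ : Z.Countable) :
    ∃ P : ∀ i j, i < j → G.Walk (F.center i) (F.center j), IsTK F.center P ∧
      ∀ i j h, (P i j h).AvoidsInternally Z := by
  let candidates := {e : Σ k : ℕ × ℕ, G.Walk (F.center k.1) (F.center k.2) |
    e.1.1 < e.1.2 ∧ e.2.IsPath ∧ 2 ≤ e.2.length ∧ e.2.AvoidsInternally (Z ∪ range F.center)}
  obtain ⟨R, hRs, hR, hmax⟩ := exists_maximal_pairwise candidates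
    (fun e e' => e.1 ≠ e'.1 ∧ e.2.InternallyDisjoint e'.2) (fun _ _ h => ⟨h.1.symm, h.2.symm⟩)
  have hcover : ∀ i j, i < j → ∃ e ∈ R, e.1 = (i, j) := by
    intro i j hij
    by_contra! hnot
    have hRc : R.Countable := (mapsTo_univ Sigma.fst R).countable_of_injOn
      (fun e he e' he' h => by_contra fun hne => (hR he he' hne).1 h) countable_univ
    obtain ⟨p, hp, hlen, hpZ⟩ := F.exists_path_avoiding hij
      (hZ.union (hRc.biUnion fun e _ => e.2.support.finite_toSet.countable))
    have hnew := hmax ⟨(i, j), p⟩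
      ⟨hij, hp, hlen, hpZ.mono (union_subset_union_left _ subset_union_left)⟩ fun e he _ =>
        ⟨(hnot e he).symm, Walk.internallyDisjoint_of_avoidsInternally (R := range F.center)
          ⟨i, rfl⟩ ⟨j, rfl⟩ (fun v hv hve => hpZ v hv (Or.inl (Or.inr (mem_biUnion he hve))))
          ((hRs he).2.2.2.mono subset_union_right)⟩
    exact hnot _ hnew rfl
  choose e he hek using hcover
  have hfst i j h : F.center (e i j h).1.1 = F.center i := by rw [hek]
  have hsnd i j h : F.center (e i j h).1.2 = F.center j := by rw [hek]
  refine ⟨fun i j h => (e i j h).2.copy (hfst i j h) (hsnd i j h), ⟨?_, ?_, ?_, ?_⟩, ?_⟩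
  · intro i j h
    simpa using (hRs (he i j h)).2.1
  · intro i j h
    simpa using (hRs (he i j h)).2.2.1
  · intro i j h
    rw [Walk.avoidsInternally_copy]
    exact (hRs (he i j h)).2.2.2.mono subset_union_right
  · intro i j h i' j' h' hne
    rw [Walk.internallyDisjoint_copy, Walk.copy_internallyDisjoint]
    exact (hR (he i j h) (he i' j' h') fun h'' => hne (by rw [← hek i j h, ← hek i' j' h', h''])).2
  · intro i j h
    rw [Walk.avoidsInternally_copy]
    exact (hRs (he i j h)).2.2.2.mono subset_union_left

theorem exists_isTK_internallyDisjoint (R : Set (∀ i j, i < j → G.Walk (F.center i) (F.center j)))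
    (hR : ∀ P ∈ R, IsTK F.center P) (hRc : R.Countable) :
    ∃ P, IsTK F.center P ∧ P ∉ R ∧
      ∀ P' ∈ R, ∀ i j h i' j' h', (P i j h).InternallyDisjoint (P' i' j' h') := by
  set Z := ⋃ P ∈ R, ⋃ i, ⋃ j, ⋃ h : i < j, {v | v ∈ (P i j h).support}
  have hZ : Z.Countable := hRc.biUnion fun P _ => countable_iUnion fun i =>
    countable_iUnion fun j => countable_iUnion fun h => (P i j h).support.finite_toSet.countable
  have hmemZ {P} (hP : P ∈ R) {i j} (h : i < j) {v} (hv : v ∈ (P i j h).support) : v ∈ Z :=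
    mem_biUnion hP (mem_iUnion_of_mem i (mem_iUnion_of_mem j (mem_iUnion_of_mem h hv)))
  obtain ⟨P, hP, hPZ⟩ := F.exists_isTK_avoiding hZ
  obtain ⟨v, hv, hv0, hv1⟩ :=
    (hP.isPath 0 1 one_pos).exists_mem_support_ne (hP.two_le_length 0 1 one_pos)
  refine ⟨P, hP, fun hPR => (hPZ 0 1 _ v hv (hmemZ hPR _ hv)).elim hv0 hv1,
    fun P' hP' i j h i' j' h' => ?_⟩
  exact Walk.internallyDisjoint_of_avoidsInternally (R := range F.center) ⟨i, rfl⟩ ⟨j, rfl⟩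
    ((hPZ i j h).mono fun v hv => hmemZ hP' h' hv) ((hR P' hP').avoidsInternally_branch i' j' h')

theorem hasFatTKAleph0 (F : G.NestedFans) : HasFatTKAleph0 G := by
  let compatible (P P' : ∀ i j, i < j → G.Walk (F.center i) (F.center j)) :=
    ∀ i j h i' j' h', (P i j h).InternallyDisjoint (P' i' j' h')
  obtain ⟨FR, hFR, hFRc, hpw⟩ := exists_uncountable_pairwise {P | IsTK F.center P} compatible
    (fun P P' h i j hij i' j' hij' => (h i' j' hij' i j hij).symm)
    fun R hR hRc _ => F.exists_isTK_internallyDisjoint R hR hRc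
  obtain ⟨ι⟩ := nonempty_aleph_one_embedding hFRc
  have hdisj : ∀ α α', α ≠ α' → compatible (ι α).1 (ι α').1 := fun α α' hne =>
    hpw (ι α).2 (ι α').2 fun h => hne (ι.injective (Subtype.ext h))
  refine ⟨⟨F.center, F.center_injective, _, Cardinal.mk_out _, fun i j h α => (ι α).1 i j h,
    fun i j h α => (hFR (ι α).2).isPath i j h, ?_, ?_, ?_⟩⟩
  · intro i j h α k hk
    exact ((hFR (ι α).2).avoidsInternally_branch i j h _ hk ⟨k, rfl⟩).imp
      (fun h => F.center_injective h) (fun h => F.center_injective h)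
  · intro i j h α i' j' h' α' hne
    by_cases hα : α = α'
    · subst hα
      exact (hFR (ι α).2).internallyDisjoint i j h i' j' h' fun hij => hne (by simp_all)
    · exact hdisj α α' hα i j h i' j' h'
  · intro i j h α α' hne heq
    obtain ⟨v, hv, hvi, hvj⟩ :=
      ((hFR (ι α).2).isPath i j h).exists_mem_support_ne ((hFR (ι α).2).two_le_length i j h)
    exact ((hdisj α α' hne i j h i j h v hv (heq ▸ hv)).1).elim hvi hvj

end NestedFans

end SimpleGraph

section AronszajnTree

open SimpleGraph

variable {V : Type*} [PartialOrder V]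

theorem wellFounded_lt_of_wellFoundedOn_Iic (h : ∀ t : V, (Iic t).WellFoundedOn (· < ·)) :
    WellFounded ((· < ·) : V → V → Prop) :=
  ⟨fun a => (Set.WellFoundedOn.acc_iff_wellFoundedOn.out 0 2).2 <| (h a).subset fun b hb => by
    have hba : Relation.TransGen (· < ·) b a := hb
    rw [Relation.transGen_eq_self] at hba
    exact hba.le⟩

theorem Iio_eq_Iic_of_covBy {b s : V} (hchain : IsChain (· ≤ ·) (Iic s)) (h : b ⋖ s) :
    Iio s = Iic b := by
  ext x
  refine ⟨fun hxs => ?_, fun hxb => lt_of_le_of_lt hxb h.1⟩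
  rcases hchain.total (mem_Iic.2 hxs.le) (mem_Iic.2 h.1.le) with hxb | hbx
  · exact hxb
  · rcases hbx.lt_or_eq with hbx | rfl
    · exact absurd hxs (h.2 hbx)
    · exact le_rfl

theorem exists_covBy_of_cofinal {D : Set V} {y : V} (hD : D.Finite) (hne : D.Nonempty)
    (hDy : ∀ d ∈ D, d < y) (hcof : ∀ x < y, ∃ d ∈ D, x ≤ d) : ∃ d ∈ D, d ⋖ y := by
  obtain ⟨m, hm⟩ := hD.exists_maximal hne
  refine ⟨m, hm.prop, hDy m hm.prop, fun z hmz hzy => ?_⟩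
  obtain ⟨d, hd, hzd⟩ := hcof z hzy
  exact hmz.not_ge (hzd.trans (hm.2 hd (hmz.le.trans hzd)))

variable {X : SimpleGraph V}

theorem IsATGraph.countable_setOf_covBy (hX : IsATGraph X) (b : V) : {s | b ⋖ s}.Countable := by
  obtain ⟨⟨-, hchain, -, -, -, hlev⟩, -, -⟩ := hX
  rcases eq_empty_or_nonempty {s | b ⋖ s} with h | ⟨s₀, hs₀⟩
  · simp [h]
  refine (hlev s₀).mono fun s (hs : b ⋖ s) => ?_
  exact ⟨OrderIso.setCongr _ _ <| by
    rw [Iio_eq_Iic_of_covBy (hchain s) hs, Iio_eq_Iic_of_covBy (hchain s₀) hs₀]⟩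

/-- If no lower neighbour of `y` can be used, `y` covers one of them, since they are cofinal
below `y`. -/
theorem IsATGraph.exists_reachable_isMin_or_covBy (hX : IsATGraph X) {B : Set V} (hB : B.Finite)
    (y : V) (hy : y ∉ B) : ∃ s, (IsMin s ∨ ∃ b ∈ B, b ⋖ s) ∧ (X.restrict Bᶜ).Reachable y s := by
  induction y using (wellFounded_lt_of_wellFoundedOn_Iic hX.1.2.2.1).induction with
  | _ y ih =>
  by_cases hmin : IsMin y
  · exact ⟨y, Or.inl hmin, Reachable.refl _⟩
  by_cases hdown : ∃ z, X.Adj y z ∧ z < y ∧ z ∉ B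
  · obtain ⟨z, hyz, hzy, hzB⟩ := hdown
    obtain ⟨s, hs, hzs⟩ := ih z hzy hzB
    have hyzB : (X.restrict Bᶜ).Adj y z := ⟨hyz, hy, hzB⟩
    exact ⟨s, hs, hyzB.reachable.trans hzs⟩
  push Not at hdown
  obtain ⟨x, hxy⟩ := not_isMin_iff.1 hmin
  have hcof : ∀ x < y, ∃ d ∈ {z | X.Adj y z ∧ z < y}, x ≤ d := fun x hxy =>
    let ⟨d, hyd, hxd, hdy⟩ := hX.2.2 hxy
    ⟨d, ⟨hyd, hdy⟩, hxd⟩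
  obtain ⟨d₀, hd₀, -⟩ := hcof x hxy
  obtain ⟨d, hd, hdy⟩ := exists_covBy_of_cofinal (hB.subset fun z hz => hdown z hz.1 hz.2)
    ⟨d₀, hd₀⟩ (fun d hd => hd.2) hcof
  exact ⟨y, Or.inr ⟨d, hdown d hd.1 hd.2, hdy⟩, Reachable.refl _⟩

theorem IsATGraph.exists_uncountable_reachable (hX : IsATGraph X) {B : Set V} (hB : B.Finite)
    {S : Set V} (hS : ¬ S.Countable) :
    ∃ s, ¬ {t ∈ S | t ∉ B ∧ (X.restrict Bᶜ).Reachable t s}.Countable := by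
  obtain ⟨r, hr⟩ := hX.1.1
  have hstops : {s : V | IsMin s ∨ ∃ b ∈ B, b ⋖ s}.Countable :=
    ((countable_singleton r).union (hB.countable.biUnion fun b _ => hX.countable_setOf_covBy b))
      |>.mono fun s hs => hs.imp (fun h => le_antisymm (h (hr s)) (hr s)) fun ⟨b, hb, hbs⟩ =>
        mem_biUnion hb hbs
  by_contra! h
  refine hS ((hB.countable.union (hstops.biUnion fun s _ => h s)).mono fun t ht => ?_)
  by_cases htB : t ∈ B
  · exact Or.inl htB
  obtain ⟨s, hs, hts⟩ := hX.exists_reachable_isMin_or_covBy hB t htB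
  exact Or.inr (mem_biUnion hs ⟨ht, htB, hts⟩)

theorem IsATGraph.exists_isFan_avoiding {W : Type*} {H : SimpleGraph W} (hX : IsATGraph X)
    (π : W → V) (hconn : ∀ x, (H.induce (π ⁻¹' {x})).Connected)
    (hadj : ∀ x y, X.Adj x y → ∃ a b, π a = x ∧ π b = y ∧ H.Adj a b) (C : Finset W)
    (N₀ : Set W) (hN₀ : ¬ N₀.Countable ∧ InjOn π N₀) :
    ∃ w ∉ C, ∃ N ⊆ N₀, (¬ N.Countable ∧ InjOn π N) ∧ ∃ P, H.IsFan w N P := by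
  set B := π '' C
  have hB : B.Finite := C.finite_toSet.image π
  obtain ⟨s, hs⟩ := hX.exists_uncountable_reachable hB
    fun h => hN₀.1 ((mapsTo_image π N₀).countable_of_injOn hN₀.2 h)
  set M := {u ∈ N₀ | π u ∉ B ∧ (X.restrict Bᶜ).Reachable (π u) s}
  have hM : ¬ M.Countable := by
    refine fun h => hs ((h.image π).mono ?_)
    rintro _ ⟨⟨u, hu, rfl⟩, htB, hts⟩
    exact ⟨u, ⟨hu, htB, hts⟩, rfl⟩
  obtain ⟨u₀, hu₀⟩ : M.Nonempty := nonempty_iff_ne_empty.2 fun h => hM (h ▸ countable_empty)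
  obtain ⟨w, N, P, hNM, hNc, hP⟩ := exists_isFan_of_reachable (G := H.restrict (π ⁻¹' Bᶜ)) M hM u₀
    fun u hu => restrict_reachable_of_reachable π hconn hadj hu₀.2.1 (hu₀.2.2.trans hu.2.2.symm)
  obtain ⟨u, hu⟩ : N.Nonempty := nonempty_iff_ne_empty.2 fun h => hNc (h ▸ countable_empty)
  have hwC : w ∉ C := fun hwC => (P u hu).start_mem_of_restrict
    (fun h => hP.center_notMem (h ▸ hu)) ⟨w, hwC, rfl⟩
  exact ⟨w, hwC, N, fun u hu => (hNM hu).1, ⟨hNc, hN₀.2.mono fun u hu => (hNM hu).1⟩, _,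
    hP.mapLe (restrict_le _)⟩

end AronszajnTree

/-- Every `IX`, where `X` is an Aronszajn-tree graph, contains a fat `TK_ℵ0`. -/
theorem stmt10 {W : Type v} {V : Type u} [PartialOrder V] (H : SimpleGraph W)
    (X : SimpleGraph V) (hX : IsATGraph X) (hH : IsIX H X) :
    HasFatTKAleph0 H := by
  obtain ⟨Vx, hVx, hconn, hadj⟩ := hH
  choose π hπ using fun w => (hVx w).exists
  obtain rfl : Vx = fun x => π ⁻¹' {x} := funext fun x =>
    ext fun w => ⟨fun h => (hVx w).unique (hπ w) h, fun (h : π w = x) => h ▸ hπ w⟩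
  have hadj' : ∀ x y, X.Adj x y → ∃ a b, π a = x ∧ π b = y ∧ H.Adj a b := fun x y h =>
    let ⟨a, ha, b, hb, hab⟩ := (hadj x y h.ne).1 h
    ⟨a, b, ha, hb, hab⟩
  obtain ⟨σ, hσ⟩ : ∃ σ : V → W, ∀ x, π (σ x) = x :=
    ⟨fun x => (hconn x).nonempty.some, fun x => (hconn x).nonempty.some.2⟩
  have hrange : ¬ (range σ).Countable ∧ InjOn π (range σ) := by
    refine ⟨fun h => hX.1.2.2.2.1 ((h.image π).mono fun x _ => ?_), ?_⟩
    · exact ⟨σ x, mem_range_self x, hσ x⟩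
    rintro _ ⟨x, rfl⟩ _ ⟨y, rfl⟩ h
    rw [hσ, hσ] at h
    rw [h]
  exact (SimpleGraph.nonempty_nestedFans_of_step _ (fun N h => h.1)
    (hX.exists_isFan_avoiding π hconn hadj') _ hrange).some.hasFatTKAleph0
end

section
/- Every countable connected graph has a normal spanning tree. -/
universe u v

/-!
Enumerate the vertices and grow finite normal trees `T₀ ⊆ T₁ ⊆ ⋯` from a root. To bring a
missing vertex `v` into `T`, let `C` be the component of `G - T` containing `v`. By normality
the neighbourhood of `C` in `T` is a chain; attach to its top vertex a path through `C` ending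
at `v`, one leaf at a time. Trees are encoded by parent maps along which a depth function
strictly decreases; these maps stabilise along the sequence, and the graph of the limit parent
map is the normal spanning tree.
-/

open SimpleGraph

def IsAncestor {V : Type u} (p : V → V) (a b : V) : Prop := ∃ k, p^[k] b = a

namespace IsAncestor

variable {V : Type u} {p q : V → V} {a b c r : V} {D : Set V}

theorem refl (p : V → V) (a : V) : IsAncestor p a a := ⟨0, rfl⟩

theorem parent (p : V → V) (b : V) : IsAncestor p (p b) b := ⟨1, rfl⟩

theorem trans (hab : IsAncestor p a b) (hbc : IsAncestor p b c) : IsAncestor p a c := by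
  obtain ⟨k, rfl⟩ := hab
  obtain ⟨j, rfl⟩ := hbc
  exact ⟨k + j, Function.iterate_add_apply p k j c⟩

theorem of_ne (hab : IsAncestor p a b) (hne : a ≠ b) : IsAncestor p a (p b) := by
  obtain ⟨_ | k, rfl⟩ := hab
  · exact absurd rfl hne
  · exact ⟨k, rfl⟩

theorem eq_of_fixed (hr : p r = r) (har : IsAncestor p a r) : a = r := by
  obtain ⟨k, rfl⟩ := har
  exact Function.iterate_fixed hr k

theorem congr (hD : Set.MapsTo p D D) (hqp : Set.EqOn q p D) (hb : b ∈ D)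
    (hab : IsAncestor p a b) : IsAncestor q a b := by
  obtain ⟨k, rfl⟩ := hab
  refine ⟨k, ?_⟩
  induction k generalizing b with
  | zero => rfl
  | succ k ih =>
    rw [Function.iterate_succ_apply, Function.iterate_succ_apply, hqp hb]
    exact ih (hD hb)

theorem lt_of_ne {d : V → ℕ} (hr : p r = r) (hD : Set.MapsTo p D D)
    (hd : ∀ v ∈ D, v ≠ r → d (p v) < d v) (hb : b ∈ D) (hab : IsAncestor p a b)
    (hne : a ≠ b) : d a < d b := by
  obtain ⟨k, rfl⟩ := hab
  induction k generalizing b with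
  | zero => exact absurd rfl hne
  | succ k ih =>
    rw [Function.iterate_succ_apply] at hne ⊢
    by_cases hbr : b = r
    · subst hbr
      rw [hr] at hne ⊢
      exact ih hb hne
    · refine lt_of_le_of_lt ?_ (hd b hb hbr)
      rcases eq_or_ne (p^[k] (p b)) (p b) with h | h
      · exact (congrArg d h).le
      · exact (ih (hD hb) h).le

end IsAncestor

theorem SimpleGraph.Walk.exists_walk_meeting_only_at_start {V : Type u} {G : SimpleGraph V}
    {D : Set V} {u v : V} (w : G.Walk v u) (hu : u ∈ D) :
    ∃ a ∈ D, ∃ w' : G.Walk a v, ∀ z ∈ w'.support, z ∈ D → z = a := by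
  induction w with
  | nil => exact ⟨_, hu, .nil, by simp⟩
  | @cons v y u hvy w ih =>
    by_cases hv : v ∈ D
    · exact ⟨v, hv, .nil, by simp⟩
    obtain ⟨a, ha, w', hw'⟩ := ih hu
    refine ⟨a, ha, w'.concat hvy.symm, fun z hz hzD => ?_⟩
    rw [Walk.support_concat, List.mem_append, List.mem_singleton] at hz
    exact hz.elim (hw' z · hzD) fun h => absurd (h ▸ hzD) hv

def parentGraph {V : Type u} (p : V → V) (r : V) : SimpleGraph V :=
  SimpleGraph.fromRel fun a b => a ≠ r ∧ p a = b

namespace parentGraph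

variable {V : Type u} {p : V → V} {r : V}

theorem adj_iff {a b : V} :
    (parentGraph p r).Adj a b ↔ a ≠ b ∧ ((a ≠ r ∧ p a = b) ∨ (b ≠ r ∧ p b = a)) :=
  fromRel_adj _ _ _

theorem isAncestor_of_walk {v u w : V} (c : (parentGraph p r).Walk u w)
    (hu : IsAncestor p v u) (hc : s(v, p v) ∉ c.edges) : IsAncestor p v w := by
  induction c with
  | nil => exact hu
  | @cons u w' w hadj c ih =>
    rw [Walk.edges_cons, List.mem_cons, not_or] at hc
    refine ih ?_ hc.2
    rcases (adj_iff.1 hadj).2 with ⟨-, rfl⟩ | ⟨-, rfl⟩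
    · exact hu.of_ne fun h => hc.1 (h ▸ rfl)
    · exact hu.trans (IsAncestor.parent p w')

theorem not_isAncestor_parent {d : V → ℕ} (hr : p r = r) (hd : ∀ v, v ≠ r → d (p v) < d v)
    {v : V} (hv : v ≠ r) : ¬ IsAncestor p v (p v) := fun h =>
  lt_asymm (hd v hv) (h.lt_of_ne hr (Set.mapsTo_univ p _) (fun v _ => hd v) trivial
    fun he => (hd v hv).ne (congrArg d he).symm)

theorem adj_parent {d : V → ℕ} (hd : ∀ v, v ≠ r → d (p v) < d v) {v : V} (hv : v ≠ r) :
    (parentGraph p r).Adj v (p v) :=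
  adj_iff.2 ⟨fun he => (hd v hv).ne (congrArg d he).symm, Or.inl ⟨hv, rfl⟩⟩

theorem reachable_root {d : V → ℕ} (hd : ∀ v, v ≠ r → d (p v) < d v) (v : V) :
    (parentGraph p r).Reachable v r := by
  induction hn : d v using Nat.strong_induction_on generalizing v with
  | _ n ih =>
    by_cases hv : v = r
    · rw [hv]
    · exact (adj_parent hd hv).reachable.trans (ih _ (hn ▸ hd v hv) _ rfl)

theorem isTree {d : V → ℕ} (hr : p r = r) (hd : ∀ v, v ≠ r → d (p v) < d v) :
    (parentGraph p r).IsTree := by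
  have : Nonempty V := ⟨r⟩
  refine ⟨⟨fun u v => (reachable_root hd u).trans (reachable_root hd v).symm⟩, ?_⟩
  rw [isAcyclic_iff_forall_adj_isBridge]
  suffices h : ∀ v, v ≠ r → (parentGraph p r).IsBridge s(v, p v) by
    intro a b hab
    rcases (adj_iff.1 hab).2 with ⟨ha, rfl⟩ | ⟨hb, rfl⟩
    · exact h a ha
    · rw [Sym2.eq_swap]
      exact h b hb
  intro v hv
  rw [isBridge_iff_forall_walk_mem_edges]
  intro c
  by_contra hc
  exact not_isAncestor_parent hr hd hv (isAncestor_of_walk c (.refl p v) hc)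

theorem treeLE_of_isAncestor (hr : p r = r) {a b : V} (hab : IsAncestor p a b) :
    treeLE (parentGraph p r) r a b := by
  intro c _
  by_cases har : a = r
  · exact har ▸ c.start_mem_support
  by_contra hac
  have hedge : s(a, p a) ∉ c.reverse.edges := by
    rw [Walk.edges_reverse, List.mem_reverse]
    exact fun he => hac (c.fst_mem_support_of_mem_edges he)
  exact har ((isAncestor_of_walk c.reverse hab hedge).eq_of_fixed hr)

theorem isNormalSpanningTree {G : SimpleGraph V} {d : V → ℕ} (hr : p r = r)
    (hd : ∀ v, v ≠ r → d (p v) < d v) (hadj : ∀ v, v ≠ r → G.Adj (p v) v)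
    (hcomp : ∀ x y, G.Adj x y → IsAncestor p x y ∨ IsAncestor p y x) :
    IsNormalSpanningTree G (parentGraph p r) r := by
  refine ⟨isTree hr hd, fun a b hab => ?_, fun x y hxy => ?_⟩
  · rcases (adj_iff.1 hab).2 with ⟨ha, rfl⟩ | ⟨hb, rfl⟩
    · exact (hadj a ha).symm
    · exact hadj b hb
  · exact (hcomp x y hxy).imp (treeLE_of_isAncestor hr) (treeLE_of_isAncestor hr)

end parentGraph

theorem eqOn_update_of_notMem {α β : Type*} [DecidableEq α] {s : Set α} {a : α} (ha : a ∉ s)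
    (f : α → β) (b : β) : Set.EqOn (Function.update f a b) f s :=
  fun _ hx => Function.update_of_ne (ne_of_mem_of_not_mem hx ha) b f

/-- Normality is required of every walk meeting the tree only in its ends, not just of edges:
this is the form that survives adding a leaf. -/
structure PartialNormalTree {V : Type u} (G : SimpleGraph V) (r : V) where
  carrier : Set V
  finite : carrier.Finite
  parent : V → V
  depth : V → ℕ
  root_mem : r ∈ carrier
  parent_root : parent r = r
  mapsTo_parent : Set.MapsTo parent carrier carrier
  adj_parent : ∀ v ∈ carrier, v ≠ r → G.Adj (parent v) v
  depth_parent_lt : ∀ v ∈ carrier, v ≠ r → depth (parent v) < depth v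
  normal : ∀ a ∈ carrier, ∀ b ∈ carrier, ∀ w : G.Walk a b,
    (∀ z ∈ w.support, z ∈ carrier → z = a ∨ z = b) →
      IsAncestor parent a b ∨ IsAncestor parent b a

namespace PartialNormalTree

variable {V : Type u} {G : SimpleGraph V} {r : V}

instance : Preorder (PartialNormalTree G r) where
  le T T' := T.carrier ⊆ T'.carrier ∧ Set.EqOn T'.parent T.parent T.carrier ∧
    Set.EqOn T'.depth T.depth T.carrier
  le_refl T := ⟨subset_rfl, Set.eqOn_refl _ _, Set.eqOn_refl _ _⟩
  le_trans T T' T'' h h' :=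
    ⟨h.1.trans h'.1, (h'.2.1.mono h.1).trans h.2.1, (h'.2.2.mono h.1).trans h.2.2⟩

def root (G : SimpleGraph V) (r : V) : PartialNormalTree G r where
  carrier := {r}
  finite := Set.finite_singleton r
  parent := id
  depth := 0
  root_mem := rfl
  parent_root := rfl
  mapsTo_parent := fun _ h => h
  adj_parent := fun _ h hr => absurd h hr
  depth_parent_lt := fun _ h hr => absurd h hr
  normal := by
    rintro a rfl b rfl - -
    exact Or.inl (IsAncestor.refl _ _)

variable (T : PartialNormalTree G r)

/-- `x` lies above every vertex of `T` from which `v` can be reached through `G - T`, that is,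
above the neighbourhood of the component of `G - T` containing `v`. -/
def AboveAttachments (x v : V) : Prop :=
  ∀ a ∈ T.carrier, ∀ w : G.Walk a v,
    (∀ z ∈ w.support, z ∈ T.carrier → z = a) → IsAncestor T.parent a x

theorem isAncestor_of_le {T' : PartialNormalTree G r} (h : T ≤ T') {a b : V}
    (hb : b ∈ T.carrier) (hab : IsAncestor T.parent a b) : IsAncestor T'.parent a b :=
  hab.congr T.mapsTo_parent h.2.1 hb

theorem depth_lt_of_isAncestor {a b : V} (hb : b ∈ T.carrier) (hab : IsAncestor T.parent a b)
    (hne : a ≠ b) : T.depth a < T.depth b :=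
  hab.lt_of_ne T.parent_root T.mapsTo_parent T.depth_parent_lt hb hne

theorem isAncestor_or_of_walks {a b v : V} (ha : a ∈ T.carrier) (hb : b ∈ T.carrier)
    (wa : G.Walk a v) (hwa : ∀ z ∈ wa.support, z ∈ T.carrier → z = a)
    (wb : G.Walk b v) (hwb : ∀ z ∈ wb.support, z ∈ T.carrier → z = b) :
    IsAncestor T.parent a b ∨ IsAncestor T.parent b a := by
  refine T.normal a ha b hb (wa.append wb.reverse) fun z hz hzT => ?_
  rw [Walk.support_append, List.mem_append] at hz
  rcases hz with hz | hz
  · exact .inl (hwa z hz hzT)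
  · refine .inr (hwb z ?_ hzT)
    simpa using List.mem_of_mem_tail hz

section addLeaf

variable [DecidableEq V] {x y : V}

theorem isAncestor_update_parent (hx : x ∈ T.carrier) (hy : y ∉ T.carrier)
    (hmax : T.AboveAttachments x y)
    {a : V} (ha : a ∈ T.carrier) (w : G.Walk a y)
    (hw : ∀ z ∈ w.support, z ∈ insert y T.carrier → z = a ∨ z = y) :
    IsAncestor (Function.update T.parent y x) a y := by
  have hax : IsAncestor T.parent a x := hmax a ha w fun z hz hzT =>
    (hw z hz (Set.mem_insert_of_mem y hzT)).resolve_right (ne_of_mem_of_not_mem hzT hy)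
  exact (hax.congr T.mapsTo_parent (eqOn_update_of_notMem hy T.parent x) hx).trans
    ⟨1, by simp⟩

def addLeaf (hx : x ∈ T.carrier) (hy : y ∉ T.carrier) (hxy : G.Adj x y)
    (hmax : T.AboveAttachments x y) :
    PartialNormalTree G r where
  carrier := insert y T.carrier
  finite := T.finite.insert y
  parent := Function.update T.parent y x
  depth := Function.update T.depth y (T.depth x + 1)
  root_mem := Set.mem_insert_of_mem y T.root_mem
  parent_root := (eqOn_update_of_notMem hy T.parent x T.root_mem).trans T.parent_root
  mapsTo_parent := by
    rintro z (rfl | hz)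
    · rw [Function.update_self]
      exact Set.mem_insert_of_mem z hx
    · rw [eqOn_update_of_notMem hy T.parent x hz]
      exact Set.mem_insert_of_mem y (T.mapsTo_parent hz)
  adj_parent := by
    rintro z (rfl | hz) hzr
    · rwa [Function.update_self]
    · rw [eqOn_update_of_notMem hy T.parent x hz]
      exact T.adj_parent z hz hzr
  depth_parent_lt := by
    have hdepth := (eqOn_update_of_notMem hy T.depth (T.depth x + 1)).symm
    rintro z (rfl | hz) hzr
    · rw [Function.update_self, Function.update_self, ← hdepth hx]
      exact Nat.lt_succ_self _
    · rw [eqOn_update_of_notMem hy T.parent x hz, ← hdepth hz, ← hdepth (T.mapsTo_parent hz)]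
      exact T.depth_parent_lt z hz hzr
  normal := by
    rintro a (rfl | ha) b (rfl | hb) w hw
    · exact .inl (IsAncestor.refl _ _)
    · refine .inr (T.isAncestor_update_parent hx hy hmax hb w.reverse fun z hz hzT => ?_)
      rw [Walk.support_reverse, List.mem_reverse] at hz
      exact (hw z hz hzT).symm
    · exact .inl (T.isAncestor_update_parent hx hy hmax ha w hw)
    · exact (T.normal a ha b hb w fun z hz hzT => hw z hz (Set.mem_insert_of_mem y hzT)).imp
        (IsAncestor.congr T.mapsTo_parent (eqOn_update_of_notMem hy T.parent x) hb)
        (IsAncestor.congr T.mapsTo_parent (eqOn_update_of_notMem hy T.parent x) ha)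

theorem le_addLeaf (hx : x ∈ T.carrier) (hy : y ∉ T.carrier) (hxy : G.Adj x y)
    (hmax : T.AboveAttachments x y) :
    T ≤ T.addLeaf hx hy hxy hmax :=
  ⟨Set.subset_insert y _, eqOn_update_of_notMem hy _ _, eqOn_update_of_notMem hy _ _⟩

end addLeaf

theorem exists_le_mem_of_isPath {x v : V} (hx : x ∈ T.carrier) (w : G.Walk x v) (hw : w.IsPath)
    (hwT : ∀ z ∈ w.support, z ∈ T.carrier → z = x)
    (hmax : T.AboveAttachments x v) :
    ∃ T', T ≤ T' ∧ v ∈ T'.carrier := by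
  classical
  induction w generalizing T with
  | nil => exact ⟨T, le_rfl, hx⟩
  | @cons x y v hxy w ih =>
    rw [Walk.cons_isPath_iff] at hw
    have hwT' : ∀ z ∈ w.support, z ∉ T.carrier := fun z hz hzT => by
      obtain rfl := hwT z (List.mem_cons_of_mem x hz) hzT
      exact hw.2 hz
    have hmax' : T.AboveAttachments x y := by
      refine fun a ha u hu => hmax a ha (u.append w) fun z hz hzT => ?_
      rw [Walk.support_append, List.mem_append] at hz
      exact hz.elim (hu z · hzT) fun hz => absurd hzT (hwT' z (List.mem_of_mem_tail hz))
    set T₁ := T.addLeaf hx (hwT' y w.start_mem_support) hxy hmax'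
    have hmax₁ : T₁.AboveAttachments y v := by
      rintro a (rfl | ha) u hu
      · exact IsAncestor.refl _ _
      · have hax := hmax a ha u fun z hz hzT => hu z hz (Set.mem_insert_of_mem y hzT)
        exact (T.isAncestor_of_le (T.le_addLeaf _ _ hxy hmax') hx hax).trans
          ⟨1, by simp [addLeaf]⟩
    obtain ⟨T', hT', hv⟩ := ih T₁ (Set.mem_insert y _) hw.1
      (fun z hz hzT => hzT.resolve_right (hwT' z hz)) hmax₁
    exact ⟨T', (T.le_addLeaf _ _ hxy hmax').trans hT', hv⟩

theorem exists_le_mem (hG : G.Preconnected) (v : V) : ∃ T', T ≤ T' ∧ v ∈ T'.carrier := by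
  classical
  by_cases hv : v ∈ T.carrier
  · exact ⟨T, le_rfl, hv⟩
  -- `S` is the neighbourhood of the component of `G - T` containing `v`.
  set S := {a ∈ T.carrier | ∃ w : G.Walk a v, ∀ z ∈ w.support, z ∈ T.carrier → z = a}
  have hS : S.Nonempty := by
    obtain ⟨a, ha, w, hw⟩ := (hG v r).some.exists_walk_meeting_only_at_start T.root_mem
    exact ⟨a, ha, w, hw⟩
  obtain ⟨x, ⟨hx, w, hw⟩, hxmax⟩ :=
    Set.exists_max_image S T.depth (T.finite.subset fun _ h => h.1) hS
  have hmax : T.AboveAttachments x v := by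
    intro a ha u hu
    by_cases hax : a = x
    · exact hax ▸ IsAncestor.refl _ _
    refine (T.isAncestor_or_of_walks ha hx u hu w hw).resolve_right fun hxa => ?_
    exact (T.depth_lt_of_isAncestor ha hxa (Ne.symm hax)).not_ge (hxmax a ⟨ha, u, hu⟩)
  exact T.exists_le_mem_of_isPath hx w.bypass w.bypass_isPath
    (fun z hz => hw z (w.support_bypass_subset_support hz)) hmax

theorem exists_monotone_covering [Countable V] (hG : G.Connected) (r : V) :
    ∃ g : ℕ → PartialNormalTree G r, Monotone g ∧ ∀ v, ∃ n, v ∈ (g n).carrier := by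
  have : Nonempty V := hG.nonempty
  obtain ⟨e, he⟩ := exists_surjective_nat V
  choose next hle hmem using fun (T : PartialNormalTree G r) n =>
    T.exists_le_mem hG.preconnected (e n)
  let g : ℕ → PartialNormalTree G r := fun n => Nat.rec (root G r) (fun n T => next T n) n
  refine ⟨g, monotone_nat_of_le_succ fun n => hle (g n) n, fun v => ?_⟩
  obtain ⟨n, rfl⟩ := he v
  exact ⟨n + 1, hmem (g n) n⟩

theorem exists_parent_of_monotone {g : ℕ → PartialNormalTree G r} (hg : Monotone g)
    (hcover : ∀ v, ∃ n, v ∈ (g n).carrier) :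
    ∃ (p : V → V) (d : V → ℕ), p r = r ∧ (∀ v, v ≠ r → d (p v) < d v) ∧
      (∀ v, v ≠ r → G.Adj (p v) v) ∧
      ∀ x y, G.Adj x y → IsAncestor p x y ∨ IsAncestor p y x := by
  choose stage hstage using hcover
  let p v := (g (stage v)).parent v
  let d v := (g (stage v)).depth v
  have hagree : ∀ n, ∀ v ∈ (g n).carrier, (g n).parent v = p v ∧ (g n).depth v = d v := by
    intro n v hv
    obtain ⟨-, hpn, hdn⟩ := hg (le_max_left n (stage v))
    obtain ⟨-, hps, hds⟩ := hg (le_max_right n (stage v))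
    exact ⟨(hpn hv).symm.trans (hps (hstage v)), (hdn hv).symm.trans (hds (hstage v))⟩
  refine ⟨p, d, (g (stage r)).parent_root, fun v hv => ?_,
    fun v hv => (g (stage v)).adj_parent v (hstage v) hv, fun x y hxy => ?_⟩
  · calc d (p v) = (g (stage v)).depth (p v) :=
          (hagree _ _ ((g _).mapsTo_parent (hstage v))).2.symm
      _ < d v := (g _).depth_parent_lt v (hstage v) hv
  · set n := max (stage x) (stage y)
    have hx := (hg (le_max_left (stage x) (stage y))).1 (hstage x)
    have hy := (hg (le_max_right (stage x) (stage y))).1 (hstage y)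
    exact ((g n).normal x hx y hy hxy.toWalk fun z hz _ => by simpa using hz).imp
      (IsAncestor.congr (g n).mapsTo_parent (fun v hv => (hagree n v hv).1.symm) hy)
      (IsAncestor.congr (g n).mapsTo_parent (fun v hv => (hagree n v hv).1.symm) hx)

end PartialNormalTree

/-- Every countable connected graph has a normal spanning tree. -/
theorem stmt15 {V : Type u} [Countable V] (G : SimpleGraph V) (hG : G.Connected) :
    ∃ (T : SimpleGraph V) (r : V), IsNormalSpanningTree G T r := by
  obtain ⟨r⟩ := hG.nonempty
  obtain ⟨g, hg, hcover⟩ := PartialNormalTree.exists_monotone_covering hG r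
  obtain ⟨p, d, hr, hd, hadj, hcomp⟩ := PartialNormalTree.exists_parent_of_monotone hg hcover
  exact ⟨parentGraph p r, r, parentGraph.isNormalSpanningTree hr hd hadj hcomp⟩
end

section
/- Let T be a normal spanning tree of a connected graph G with root r. Then every level of T (the set of vertices at a fixed tree-distance from r) is a dispersed set of vertices of G. -/
universe u v

/-! By normality, every `G`-neighbour of the up-closure of a vertex `t` in the tree order lies in
the finite down-closure `⌈t⌉`, so the up-closure of `t` minus `t` is a union of components of
`G - ⌈t⌉`. Using this again, one shows by induction on `n` that every ray eventually stays above
some vertex `t` of level `n`. Then `⌈t⌉` separates the ray from level `n`: a vertex of level `n`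
above `t` is `t` itself. -/

open SimpleGraph Filter

section TreeOrder

variable {V : Type*} {T : SimpleGraph V} {r x y z : V}

lemma treeLE_root (y : V) : treeLE T r r y := fun p _ => p.start_mem_support

lemma treeLE_refl (y : V) : treeLE T r y y := fun p _ => p.end_mem_support

lemma treeLE_trans (hxy : treeLE T r x y) (hyz : treeLE T r y z) : treeLE T r x z := by
  classical
  exact fun p hp => p.support_takeUntil_subset_support (hyz p hp) (hxy _ (hp.takeUntil _))

lemma treeLE_iff_mem_support (hT : T.IsTree) {p : T.Walk r y} (hp : p.IsPath) :
    treeLE T r x y ↔ x ∈ p.support :=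
  ⟨fun h => h p hp, fun hx _ hq => (hT.existsUnique_path r y).unique hq hp ▸ hx⟩

lemma finite_setOf_treeLE (hT : T.Preconnected) (r y : V) : {x | treeLE T r x y}.Finite := by
  obtain ⟨p, hp⟩ := (hT r y).exists_isPath
  exact p.support.finite_toSet.subset fun x hx => hx p hp

lemma dist_lt_of_treeLE (hT : T.Preconnected) (hxy : treeLE T r x y) (hne : x ≠ y) :
    T.dist r x < T.dist r y := by
  classical
  obtain ⟨p, hp, hlen⟩ := (hT r y).exists_path_of_dist
  calc T.dist r x ≤ (p.takeUntil x (hxy p hp)).length := dist_le _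
    _ < p.length := p.length_takeUntil_lt_length _ hne
    _ = T.dist r y := hlen

lemma eq_of_treeLE_of_dist_le (hT : T.Preconnected) (hxy : treeLE T r x y)
    (hdist : T.dist r y ≤ T.dist r x) : x = y := by
  by_contra hne
  exact (dist_lt_of_treeLE hT hxy hne).not_ge hdist

lemma treeLE_total_of_treeLE (hT : T.IsTree) (hxz : treeLE T r x z) (hyz : treeLE T r y z) :
    treeLE T r x y ∨ treeLE T r y x := by
  classical
  obtain ⟨p, hp⟩ := (hT.existsUnique_path r z).exists
  have hx := hxz p hp
  have hy := hyz p hp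
  rw [treeLE_iff_mem_support hT (hp.takeUntil hy), treeLE_iff_mem_support hT (hp.takeUntil hx)]
  exact (List.prefix_or_prefix_of_prefix (p.support_takeUntil_prefix_support hx)
    (p.support_takeUntil_prefix_support hy)).imp
    (fun h => h.subset (p.takeUntil x hx).end_mem_support)
    (fun h => h.subset (p.takeUntil y hy).end_mem_support)

lemma SimpleGraph.IsTree.dist_eq_length (hT : T.IsTree) {p : T.Walk x y} (hp : p.IsPath) :
    T.dist x y = p.length := by
  obtain ⟨q, hq, hlen⟩ := (hT.connected.preconnected x y).exists_path_of_dist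
  rw [← hlen, (hT.existsUnique_path x y).unique hq hp]

lemma exists_treeLE_dist_eq (hT : T.IsTree) {k : ℕ} (hk : k ≤ T.dist r y) :
    ∃ x, treeLE T r x y ∧ T.dist r x = k := by
  obtain ⟨p, hp⟩ := (hT.existsUnique_path r y).exists
  refine ⟨p.getVert k, (treeLE_iff_mem_support hT hp).2 (p.getVert_mem_support k), ?_⟩
  rw [hT.dist_eq_length (hp.take k), Walk.take_length, ← hT.dist_eq_length hp]
  exact min_eq_left hk

end TreeOrder

lemma IsRay.eventually_ne {V : Type*} {G : SimpleGraph V} {f : ℕ → V} (hf : IsRay G f)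
    (v : V) : ∀ᶠ k in atTop, f k ≠ v :=
  Nat.cofinite_eq_atTop ▸ hf.1.tendsto_cofinite.eventually (eventually_cofinite_ne v)

namespace IsNormalSpanningTree

variable {V : Type*} {G T : SimpleGraph V} {r : V}

lemma treeLE_or_treeLE_of_adj (h : IsNormalSpanningTree G T r) {s x y : V}
    (hsx : treeLE T r s x) (hxy : G.Adj x y) : treeLE T r s y ∨ treeLE T r y s :=
  (h.2.2 hxy).elim (fun hxy => .inl (treeLE_trans hsx hxy))
    (fun hyx => treeLE_total_of_treeLE h.1 hsx hyx)

lemma treeLE_of_reachable_induce_compl (h : IsNormalSpanningTree G T r) {t : V}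
    {a b : ↥({x | treeLE T r x t}ᶜ)} (hab : (G.induce {x | treeLE T r x t}ᶜ).Reachable a b)
    (ha : treeLE T r t a) : treeLE T r t b := by
  obtain ⟨w⟩ := hab
  induction w with
  | nil => exact ha
  | @cons a c b hadj _ ih => exact ih ((h.treeLE_or_treeLE_of_adj ha hadj).resolve_right c.2)

lemma exists_dist_eq_eventually_treeLE (h : IsNormalSpanningTree G T r) {f : ℕ → V}
    (hf : IsRay G f) (j : ℕ) : ∃ t, T.dist r t = j ∧ ∀ᶠ k in atTop, treeLE T r t (f k) := by
  have hT := h.1.connected.preconnected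
  induction j with
  | zero => exact ⟨r, dist_self, .of_forall fun k => treeLE_root (f k)⟩
  | succ j ih =>
    obtain ⟨t, rfl, ht⟩ := ih
    obtain ⟨m, hm⟩ := eventually_atTop.1 (ht.and (hf.eventually_ne t))
    have hlt : ∀ k ≥ m, T.dist r t < T.dist r (f k) :=
      fun k hk => dist_lt_of_treeLE hT (hm k hk).1 (hm k hk).2.symm
    obtain ⟨s, hsm, hs⟩ := exists_treeLE_dist_eq h.1 (hlt m le_rfl)
    -- A step of the ray from above `s` to strictly below `s` would reach level `dist r t` or
    -- lower, while from index `m` on the ray stays strictly above `t`.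
    have hs_le : ∀ k ≥ m, treeLE T r s (f k) := by
      intro k hk
      induction k, hk using Nat.le_induction with
      | base => exact hsm
      | succ k hk ih =>
        refine (h.treeLE_or_treeLE_of_adj ih (hf.2 k)).elim id fun hks => ?_
        have hdist := hlt (k + 1) (by omega)
        exact eq_of_treeLE_of_dist_le hT hks (by omega) ▸ treeLE_refl _
    exact ⟨s, hs, eventually_atTop.2 ⟨m, hs_le⟩⟩

end IsNormalSpanningTree

theorem stmt16_general {V : Type u} (G T : SimpleGraph V) (r : V)
    (h : IsNormalSpanningTree G T r) (n : ℕ) :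
    Dispersed G {v : V | T.dist r v = n} := by
  have hT := h.1.connected.preconnected
  intro f hf
  obtain ⟨t, rfl, ht⟩ := h.exists_dist_eq_eventually_treeLE hf n
  obtain ⟨m, hm⟩ := eventually_atTop.1 ht
  refine ⟨{x | treeLE T r x t}, finite_setOf_treeLE hT r t, m, fun k hk u hu hut _ hreach => hut ?_⟩
  have htu : treeLE T r t u := h.treeLE_of_reachable_induce_compl hreach.symm (hm k hk)
  exact eq_of_treeLE_of_dist_le hT htu hu.le ▸ treeLE_refl t

/-- Every level of a normal spanning tree of a connected graph `G` is a dispersed set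
of vertices of `G`. -/
theorem stmt16 {V : Type u} (G T : SimpleGraph V) (r : V)
    (hG : G.Connected) (h : IsNormalSpanningTree G T r) (n : ℕ) :
    Dispersed G {v : V | T.dist r v = n} :=
  stmt16_general G T r h n
end
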